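/- arXiv:2506.20556 — 13 statements merged into one kernel-verified Lean document; each statement's English description precedes it below -/
import Mathlib

section
/- Let a + b < n and a < n/2 < b, and let ℱ be a maximal independent set of flags of type {a,b} of [n] (pairwise non-opposite, and maximal under inclusion). A b-subset B of [n] is contained in exactly C(b,a) flags of ℱ if and only if every flag (A',B') ∈ ℱ satisfies A' ∩ B ≠ ∅ or B ∪ B' ≠ [n]. -/
open Finset

/-- The ground set `[n] = {1,…,n}`. -/
def Iv (n : ℕ) : Finset ℕ := Finset.Icc 1 n

/-- A flag of type `{a,b}` of `[n]`: a pair `(A,B)` with `A ⊆ B ⊆ [n]`, `|A| = a`, `|B| = b`. -/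
def IsFlag (n a b : ℕ) (f : Finset ℕ × Finset ℕ) : Prop :=
  f.1 ⊆ f.2 ∧ f.2 ⊆ Iv n ∧ f.1.card = a ∧ f.2.card = b

/-- Opposition of flags `(A₁,B₁)`, `(A₂,B₂)`: `B₁ ∪ B₂ = [n]`, `A₁ ∩ B₂ = ∅`, `A₂ ∩ B₁ = ∅`. -/
def OppFlag (n : ℕ) (f g : Finset ℕ × Finset ℕ) : Prop :=
  f.2 ∪ g.2 = Iv n ∧ f.1 ∩ g.2 = ∅ ∧ g.1 ∩ f.2 = ∅

/-- An independent (EKR) set of flags: pairwise non-opposite. -/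
def Indep (n : ℕ) (F : Finset (Finset ℕ × Finset ℕ)) : Prop :=
  ∀ f ∈ F, ∀ g ∈ F, ¬ OppFlag n f g

/-- The `ℱ`-weight of a `b`-set `B`: the number of flags in `ℱ` with second component `B`. -/
def weightB (F : Finset (Finset ℕ × Finset ℕ)) (B : Finset ℕ) : ℕ :=
  (F.filter (fun f => f.2 = B)).card

/-- The `ℱ`-weight of an `a`-set `A`: the number of flags in `ℱ` with first component `A`. -/
def weightA (F : Finset (Finset ℕ × Finset ℕ)) (A : Finset ℕ) : ℕ :=
  (F.filter (fun f => f.1 = A)).card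

/-- A maximal independent set of flags of type `{a,b}`. -/
def MaximalIndep (n a b : ℕ) (F : Finset (Finset ℕ × Finset ℕ)) : Prop :=
  (∀ f ∈ F, IsFlag n a b f) ∧ Indep n F ∧
    (∀ f, IsFlag n a b f → Indep n (insert f F) → f ∈ F)

/-! A `b`-set `B` has full weight iff every `(A, B)` with `A ⊆ B`, `|A| = a` lies in `ℱ`. As
`B ≠ [n]`, maximality puts such an `(A, B)` in `ℱ` exactly when it is opposite to no member of
`ℱ`; and some `(A, B)` is opposite to `(A', B')` exactly when `A' ∩ B = ∅` and `B ∪ B' = [n]`. -/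

theorem oppFlag_comm {n : ℕ} {f g : Finset ℕ × Finset ℕ} : OppFlag n f g ↔ OppFlag n g f := by
  unfold OppFlag
  rw [union_comm]
  tauto

theorem OppFlag.snd_eq_of_self {n : ℕ} {g : Finset ℕ × Finset ℕ} (h : OppFlag n g g) :
    g.2 = Iv n := by
  simpa only [union_self] using h.1

theorem indep_insert {n : ℕ} {g : Finset ℕ × Finset ℕ} {F : Finset (Finset ℕ × Finset ℕ)} :
    Indep n (insert g F) ↔ ¬ OppFlag n g g ∧ (∀ f ∈ F, ¬ OppFlag n g f) ∧ Indep n F := by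
  simp only [Indep, forall_mem_insert]
  constructor
  · rintro ⟨⟨hgg, hgF⟩, hF⟩
    exact ⟨hgg, hgF, fun f hf => (hF f hf).2⟩
  · rintro ⟨hgg, hgF, hF⟩
    exact ⟨⟨hgg, hgF⟩, fun f hf => ⟨fun h => hgF f hf (oppFlag_comm.1 h), hF f hf⟩⟩

theorem MaximalIndep.mem_iff {n a b : ℕ} {F : Finset (Finset ℕ × Finset ℕ)}
    (hF : MaximalIndep n a b F) {g : Finset ℕ × Finset ℕ} (hg : IsFlag n a b g)
    (hg₂ : g.2 ≠ Iv n) : g ∈ F ↔ ∀ f ∈ F, ¬ OppFlag n g f := by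
  obtain ⟨-, hind, hmax⟩ := hF
  refine ⟨fun hgF f hf => hind g hgF f hf, fun hgF => hmax g hg ?_⟩
  exact indep_insert.2 ⟨fun h => hg₂ h.snd_eq_of_self, hgF, hind⟩

theorem weightB_eq_card_filter_powersetCard {n a b : ℕ} {F : Finset (Finset ℕ × Finset ℕ)}
    (hflag : ∀ f ∈ F, IsFlag n a b f) (B : Finset ℕ) :
    weightB F B = #((B.powersetCard a).filter fun A => (A, B) ∈ F) := by
  refine card_nbij' Prod.fst (fun A => (A, B)) ?_ ?_ ?_ ?_
  · rintro f hf
    obtain ⟨hfF, rfl⟩ := mem_filter.1 (mem_coe.1 hf)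
    obtain ⟨hsub, -, hcard, -⟩ := hflag f hfF
    simpa [hsub, hcard] using hfF
  · rintro A hA
    simpa using (mem_filter.1 (mem_coe.1 hA)).2
  · rintro f hf
    exact Prod.ext rfl (mem_filter.1 (mem_coe.1 hf)).2.symm
  · rintro A -
    rfl

theorem weightB_eq_choose_iff {n a b : ℕ} {F : Finset (Finset ℕ × Finset ℕ)}
    (hflag : ∀ f ∈ F, IsFlag n a b f) {B : Finset ℕ} (hBcard : B.card = b) :
    weightB F B = b.choose a ↔ ∀ A ⊆ B, A.card = a → (A, B) ∈ F := by
  rw [weightB_eq_card_filter_powersetCard hflag, ← hBcard, ← card_powersetCard,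
    card_filter_eq_iff]
  simp only [mem_powersetCard, and_imp]

/-- If `B ∪ B' = [n]` and `|B'| = b`, then `B \ B'` has `n - b ≥ a` elements; any `a`-subset `A`
of it makes `(A, B)` opposite to `(A', B')`. -/
theorem forall_not_oppFlag_iff {n a b : ℕ} (hab : a + b ≤ n) {f : Finset ℕ × Finset ℕ}
    (hf₂ : f.2.card = b) (B : Finset ℕ) :
    (∀ A ⊆ B, A.card = a → ¬ OppFlag n (A, B) f) ↔ f.1 ∩ B ≠ ∅ ∨ B ∪ f.2 ≠ Iv n := by
  constructor
  · intro h
    by_contra! hcon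
    obtain ⟨h₁, hunion⟩ := hcon
    have hdiff : a ≤ (B \ f.2).card := by
      have hcu : (B ∪ f.2).card = n := by simp [hunion, Iv]
      have := card_sdiff_add_card B f.2
      omega
    obtain ⟨A, hAsub, hAcard⟩ := exists_subset_card_eq hdiff
    refine h A (hAsub.trans sdiff_subset) hAcard ⟨hunion, ?_, h₁⟩
    exact disjoint_iff_inter_eq_empty.1 (disjoint_sdiff_self_left.mono_left hAsub)
  · rintro h A - - ⟨hunion, -, h₁⟩
    exact h.elim (· h₁) (· hunion)

theorem stmt_1_general (n a b : ℕ) (hab : a + b < n)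
    (F : Finset (Finset ℕ × Finset ℕ)) (hF : MaximalIndep n a b F)
    (B : Finset ℕ) (hB : B ⊆ Iv n) (hBcard : B.card = b) :
    weightB F B = Nat.choose b a ↔
      ∀ f ∈ F, f.1 ∩ B ≠ ∅ ∨ B ∪ f.2 ≠ Iv n := by
  have hBn : B ≠ Iv n := by
    rintro rfl
    simp only [Iv, Nat.card_Icc, add_tsub_cancel_right] at hBcard
    omega
  rw [weightB_eq_choose_iff hF.1 hBcard]
  calc (∀ A ⊆ B, A.card = a → (A, B) ∈ F)
      ↔ ∀ A ⊆ B, A.card = a → ∀ f ∈ F, ¬ OppFlag n (A, B) f :=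
        forall₃_congr fun A hA hAcard => hF.mem_iff ⟨hA, hB, hAcard, hBcard⟩ hBn
    _ ↔ ∀ f ∈ F, ∀ A ⊆ B, A.card = a → ¬ OppFlag n (A, B) f :=
        ⟨fun h f hf A hA hc => h A hA hc f hf, fun h A hA hc f hf => h f hf A hA hc⟩
    _ ↔ ∀ f ∈ F, f.1 ∩ B ≠ ∅ ∨ B ∪ f.2 ≠ Iv n :=
        forall₂_congr fun f hf => forall_not_oppFlag_iff hab.le (hF.1 f hf).2.2.2 B

/-- in a maximal independent set `ℱ` of flags of type `{a,b}`,
a `b`-set `B` has weight `C(b,a)` iff every flag `(A',B') ∈ ℱ` satisfies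
`A' ∩ B ≠ ∅` or `B ∪ B' ≠ [n]`. -/
theorem stmt_1 (n a b : ℕ) (hab : a + b < n) (ha : 2 * a < n) (hb : n < 2 * b)
    (F : Finset (Finset ℕ × Finset ℕ)) (hF : MaximalIndep n a b F)
    (B : Finset ℕ) (hB : B ⊆ Iv n) (hBcard : B.card = b) :
    weightB F B = Nat.choose b a ↔
      ∀ f ∈ F, f.1 ∩ B ≠ ∅ ∨ B ∪ f.2 ≠ Iv n :=
  stmt_1_general n a b hab F hF B hB hBcard
end

section
/- Let a + b < n and a < n/2 < b, and let ℱ be a maximal independent set of flags of type {a,b} of [n]. If a b-subset B of [n] has ℱ-weight strictly less than C(b,a), then its weight is at most C(b,a) − C(n−b,a). -/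
open Finset

/-- in a maximal independent set `ℱ` of flags of type `{a,b}`,
a `b`-set of weight less than `C(b,a)` has weight at most `C(b,a) − C(n−b,a)`. -/
theorem stmt_2 (n a b : ℕ) (hab : a + b < n) (ha : 2 * a < n) (hb : n < 2 * b)
    (F : Finset (Finset ℕ × Finset ℕ)) (hF : MaximalIndep n a b F)
    (B : Finset ℕ) (hB : B ⊆ Iv n) (hBcard : B.card = b)
    (hw : weightB F B < Nat.choose b a) :
    weightB F B ≤ Nat.choose b a - Nat.choose (n - b) a := by
  obtain ⟨hflag, hind, hmax⟩ := hF
  have hIv : (Iv n).card = n := by simp [Iv]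
  set G := (B.powersetCard a).filter (fun A => (A, B) ∈ F) with hGdef
  set M := (B.powersetCard a).filter (fun A => ¬ (A, B) ∈ F) with hMdef
  have hweight : weightB F B = G.card := by
    rw [weightB]
    apply Finset.card_bij (fun f _ => f.1)
    · intro f hf
      simp only [mem_filter] at hf
      obtain ⟨hfF, hf2⟩ := hf
      obtain ⟨hsub, _, hca, _⟩ := hflag f hfF
      have hfe : (f.1, B) = f := by rw [← hf2]
      simp only [hGdef, mem_filter, mem_powersetCard]
      exact ⟨⟨hf2 ▸ hsub, hca⟩, hfe ▸ hfF⟩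
    · intro f hf g hg hfg
      simp only [mem_filter] at hf hg
      exact Prod.ext hfg (hf.2.trans hg.2.symm)
    · intro A hA
      simp only [hGdef, mem_filter, mem_powersetCard] at hA
      exact ⟨(A, B), by simp [hA.2], rfl⟩
  have hsum : G.card + M.card = Nat.choose b a := by
    rw [hGdef, hMdef, Finset.card_filter_add_card_filter_not,
      Finset.card_powersetCard, hBcard]
  have hMpos : 0 < M.card := by omega
  obtain ⟨A₀, hA₀⟩ := Finset.card_pos.mp hMpos
  simp only [hMdef, mem_filter, mem_powersetCard] at hA₀
  obtain ⟨⟨hA₀B, hA₀card⟩, hA₀F⟩ := hA₀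
  have hflag0 : IsFlag n a b (A₀, B) := ⟨hA₀B, hB, hA₀card, hBcard⟩
  have hnotind : ¬ Indep n (insert (A₀, B) F) := fun h => hA₀F (hmax _ hflag0 h)
  rw [Indep] at hnotind
  push_neg at hnotind
  obtain ⟨f, hf, g, hg, hopp⟩ := hnotind
  have hsymm : ∀ {f g : Finset ℕ × Finset ℕ}, OppFlag n f g → OppFlag n g f := by
    intro f g ⟨h1, h2, h3⟩
    exact ⟨by rw [union_comm]; exact h1, h3, h2⟩
  have hself : ¬ OppFlag n (A₀, B) (A₀, B) := by
    intro ⟨h1, _, _⟩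
    simp only [union_self] at h1
    have := congrArg Finset.card h1
    rw [hBcard, hIv] at this
    omega
  -- extract g' ∈ F opposite to (A₀, B)
  have hkey : ∃ g' ∈ F, OppFlag n (A₀, B) g' := by
    rcases mem_insert.mp hf with hf1 | hf2
    · rcases mem_insert.mp hg with hg1 | hg2
      · subst hf1; subst hg1; exact absurd hopp hself
      · exact ⟨g, hg2, hf1 ▸ hopp⟩
    · rcases mem_insert.mp hg with hg1 | hg2
      · exact ⟨f, hf2, hsymm (hg1 ▸ hopp)⟩
      · exact absurd hopp (hind f hf2 g hg2)
  obtain ⟨g', hg'F, h1, h2, h3⟩ := hkey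
  obtain ⟨hg'sub, hg'Iv, hg'a, hg'b⟩ := hflag g' hg'F
  set S := Iv n \ g'.2 with hSdef
  have hScard : S.card = n - b := by
    rw [hSdef, Finset.card_sdiff_of_subset hg'Iv, hIv, hg'b]
  have hSB : S ⊆ B := by
    intro x hx
    rw [hSdef, mem_sdiff] at hx
    have : x ∈ B ∪ g'.2 := h1 ▸ hx.1
    rcases mem_union.mp this with h | h
    · exact h
    · exact absurd h hx.2
  have hSM : S.powersetCard a ⊆ M := by
    intro A hA
    rw [mem_powersetCard] at hA
    obtain ⟨hAS, hAcard⟩ := hA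
    simp only [hMdef, mem_filter, mem_powersetCard]
    refine ⟨⟨hAS.trans hSB, hAcard⟩, fun hABF => ?_⟩
    apply hind (A, B) hABF g' hg'F
    refine ⟨h1, ?_, h3⟩
    rw [Finset.eq_empty_iff_forall_notMem]
    intro x hx
    rw [mem_inter] at hx
    have := hAS hx.1
    rw [hSdef, mem_sdiff] at this
    exact this.2 hx.2
  have hMge : Nat.choose (n - b) a ≤ M.card := by
    calc Nat.choose (n - b) a = (S.powersetCard a).card := by
          rw [Finset.card_powersetCard, hScard]
      _ ≤ M.card := Finset.card_le_card hSM
  omega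
end

section
/- Let f and f' be flags of [n] of type T that are non-opposite. Then for any i, j ∈ [n], the shifted flags S_{i,j}(f) and S_{i,j}(f') are also non-opposite. -/
/-!
A shift preserves the size of each set and cannot decrease the size of an intersection, so by
inclusion–exclusion it cannot increase the size of a union either. Hence if the shifted sets
are disjoint or cover `[n]`, so were the original ones: shifting cannot create oppositeness.
-/

open Finset

/-- Two subsets of `[n]` are opposite if they meet trivially or their union is `[n]`. -/
def OppSet (n : ℕ) (X Y : Finset ℕ) : Prop := X ∩ Y = ∅ ∨ X ∪ Y = Iv n

/-- A flag of type `T` of `[n]`: a chain of non-empty proper subsets of `[n]`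
whose set of sizes is `T`. -/
def IsFlagT (n : ℕ) (T : Finset ℕ) (f : Finset (Finset ℕ)) : Prop :=
  (∀ X ∈ f, X ⊆ Iv n ∧ X.Nonempty ∧ X ≠ Iv n) ∧
  (∀ X ∈ f, ∀ Y ∈ f, X ⊆ Y ∨ Y ⊆ X) ∧
  f.image Finset.card = T

/-- Two flags are opposite iff all their members are pairwise opposite. -/
def OppFlags (n : ℕ) (f g : Finset (Finset ℕ)) : Prop :=
  ∀ X ∈ f, ∀ Y ∈ g, OppSet n X Y

/-- An independent set of flags: pairwise non-opposite. -/
def IndepT (n : ℕ) (F : Finset (Finset (Finset ℕ))) : Prop :=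
  ∀ f ∈ F, ∀ g ∈ F, ¬ OppFlags n f g

/-- The `i,j`-shift of a subset `A` of `[n]`. -/
def shift (i j : ℕ) (A : Finset ℕ) : Finset ℕ :=
  if i ∈ A ∧ j ∉ A then insert j (A.erase i) else A

/-- The `i,j`-shift of a flag, applied pointwise. -/
def shiftFlag (i j : ℕ) (f : Finset (Finset ℕ)) : Finset (Finset ℕ) :=
  f.image (shift i j)

/-- The `i,j`-shift of a set of flags. -/
def shiftFam (i j : ℕ) (F : Finset (Finset (Finset ℕ))) :
    Finset (Finset (Finset ℕ)) :=
  F.image (fun f => if shiftFlag i j f ∈ F then f else shiftFlag i j f)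

section Shift

variable (i j : ℕ)

lemma card_shift (A : Finset ℕ) : (shift i j A).card = A.card := by
  unfold shift
  split
  · next h =>
    rw [card_insert_of_notMem (fun hj => h.2 (mem_of_mem_erase hj)), card_erase_of_mem h.1]
    have : 0 < A.card := card_pos.2 ⟨i, h.1⟩
    omega
  · rfl

lemma shift_inter_subset (A B : Finset ℕ) :
    shift i j (A ∩ B) ⊆ shift i j A ∩ shift i j B := by
  unfold shift
  split_ifs <;> intro x hx <;>
    simp only [mem_inter, mem_insert, mem_erase, not_and, not_not] at * <;>
    by_cases hxj : x = j <;> by_cases hxi : x = i <;> subst_vars <;> tauto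

lemma card_inter_le_card_shift_inter (A B : Finset ℕ) :
    (A ∩ B).card ≤ (shift i j A ∩ shift i j B).card := by
  rw [← card_shift i j (A ∩ B)]
  exact card_le_card (shift_inter_subset i j A B)

lemma card_shift_union_le (A B : Finset ℕ) :
    (shift i j A ∪ shift i j B).card ≤ (A ∪ B).card := by
  have hAB := card_union_add_card_inter A B
  have hshift := card_union_add_card_inter (shift i j A) (shift i j B)
  rw [card_shift, card_shift] at hshift
  have := card_inter_le_card_shift_inter i j A B
  omega

end Shift

lemma OppSet.of_shift {n i j : ℕ} {X Y : Finset ℕ} (hX : X ⊆ Iv n) (hY : Y ⊆ Iv n)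
    (h : OppSet n (shift i j X) (shift i j Y)) : OppSet n X Y := by
  rcases h with hdisj | hcover
  · left
    rw [← card_eq_zero] at hdisj ⊢
    have := card_inter_le_card_shift_inter i j X Y
    omega
  · right
    refine eq_of_subset_of_card_le (union_subset hX hY) ?_
    rw [← hcover]
    exact card_shift_union_le i j X Y

lemma OppFlags.of_shiftFlag {n i j : ℕ} {f f' : Finset (Finset ℕ)}
    (hf : ∀ X ∈ f, X ⊆ Iv n) (hf' : ∀ Y ∈ f', Y ⊆ Iv n)
    (h : OppFlags n (shiftFlag i j f) (shiftFlag i j f')) : OppFlags n f f' :=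
  fun X hX Y hY =>
    (h _ (mem_image_of_mem _ hX) _ (mem_image_of_mem _ hY)).of_shift (hf X hX) (hf' Y hY)

theorem stmt_6_general (n : ℕ) (T : Finset ℕ) (i j : ℕ)
    (f f' : Finset (Finset ℕ)) (hf : IsFlagT n T f) (hf' : IsFlagT n T f')
    (h : ¬ OppFlags n f f') :
    ¬ OppFlags n (shiftFlag i j f) (shiftFlag i j f') :=
  fun hshift => h (hshift.of_shiftFlag (fun X hX => (hf.1 X hX).1) (fun Y hY => (hf'.1 Y hY).1))

/-- if two flags of type `T` of `[n]` are non-opposite, then so are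
their `i,j`-shifts. -/
theorem stmt_6 (n : ℕ) (T : Finset ℕ) (i j : ℕ) (hi : i ∈ Iv n) (hj : j ∈ Iv n)
    (f f' : Finset (Finset ℕ)) (hf : IsFlagT n T f) (hf' : IsFlagT n T f')
    (h : ¬ OppFlags n f f') :
    ¬ OppFlags n (shiftFlag i j f) (shiftFlag i j f') :=
  stmt_6_general n T i j f f' hf hf' h
end

section
/- For any subsets A, A' ⊆ [n] and any i, j ∈ [n], we have |A ∩ A'| ≤ |S_{i,j}(A) ∩ S_{i,j}(A')|. -/
open Finset

/-- `|A ∩ A'| ≤ |S_{i,j}(A) ∩ S_{i,j}(A')|` for all subsets `A, A'` of `[n]`. -/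
theorem stmt_7 (n i j : ℕ) (hi : i ∈ Iv n) (hj : j ∈ Iv n)
    (A A' : Finset ℕ) (hA : A ⊆ Iv n) (hA' : A' ⊆ Iv n) :
    (A ∩ A').card ≤ (shift i j A ∩ shift i j A').card := by
  have hcard : (shift i j (A ∩ A')).card = (A ∩ A').card := by
    unfold shift
    split
    · next h =>
      rw [Finset.card_insert_of_notMem (fun hj' => h.2 (Finset.mem_of_mem_erase hj')),
        Finset.card_erase_of_mem h.1]
      have : 0 < (A ∩ A').card := Finset.card_pos.mpr ⟨i, h.1⟩
      omega
    · rfl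
  have hsub : shift i j (A ∩ A') ⊆ shift i j A ∩ shift i j A' := by
    intro x hx
    have key : ∀ B : Finset ℕ, x ∈ B → (x = i → j ∈ B) → x ∈ shift i j B := by
      intro B hxB hxi
      unfold shift
      split
      · next h2 =>
        simp only [Finset.mem_insert, Finset.mem_erase]
        by_cases hx' : x = i
        · subst hx'
          exact absurd (hxi rfl) h2.2
        · exact Or.inr ⟨hx', hxB⟩
      · exact hxB
    rw [Finset.mem_inter]
    unfold shift at hx
    split at hx
    · next h =>
      rw [Finset.mem_insert, Finset.mem_erase] at hx
      rcases hx with hxj | ⟨hxi, hxm⟩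
      · rw [hxj]
        have hiA := (Finset.mem_inter.mp h.1).1
        have hiA' := (Finset.mem_inter.mp h.1).2
        have hjA : j ∉ A ∩ A' := h.2
        constructor
        · unfold shift
          split
          · exact Finset.mem_insert_self _ _
          · next h2 =>
            push_neg at h2
            exact h2 hiA
        · unfold shift
          split
          · exact Finset.mem_insert_self _ _
          · next h2 =>
            push_neg at h2
            exact h2 hiA'
      · obtain ⟨hxA, hxA'⟩ := Finset.mem_inter.mp hxm
        exact ⟨key A hxA (fun h' => absurd h' hxi), key A' hxA' (fun h' => absurd h' hxi)⟩
    · next h =>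
      push_neg at h
      obtain ⟨hxA, hxA'⟩ := Finset.mem_inter.mp hx
      have hxi : x = i → j ∈ A ∩ A' := by
        rintro rfl
        exact h (Finset.mem_inter.mpr ⟨hxA, hxA'⟩)
      exact ⟨key A hxA (fun h' => (Finset.mem_inter.mp (hxi h')).1),
        key A' hxA' (fun h' => (Finset.mem_inter.mp (hxi h')).2)⟩
  calc (A ∩ A').card = (shift i j (A ∩ A')).card := hcard.symm
    _ ≤ _ := Finset.card_le_card hsub
end

section
/- Let ℱ be an independent set of flags of type T of [n], and let i, j ∈ [n]. Then S_{i,j}(ℱ) is also an independent set of flags of type T, and |S_{i,j}(ℱ)| = |ℱ|. -/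
open Finset

lemma shift_eq_self {i j : ℕ} {A : Finset ℕ} (h : ¬(i ∈ A ∧ j ∉ A)) : shift i j A = A :=
  if_neg h

lemma shift_eq_of {i j : ℕ} {A : Finset ℕ} (h : i ∈ A ∧ j ∉ A) :
    shift i j A = insert j (A.erase i) := if_pos h

lemma shift_card (i j : ℕ) (A : Finset ℕ) : (shift i j A).card = A.card := by
  unfold shift; split_ifs with h
  · obtain ⟨hiA, hjA⟩ := h
    have hjn : j ∉ A.erase i := fun hc => hjA (Finset.mem_of_mem_erase hc)
    rw [Finset.card_insert_of_notMem hjn, Finset.card_erase_of_mem hiA]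
    have : 0 < A.card := Finset.card_pos.2 ⟨i, hiA⟩
    omega
  · rfl

lemma shift_subset_Iv {n i j : ℕ} {A : Finset ℕ} (hA : A ⊆ Iv n) (hj : j ∈ Iv n) :
    shift i j A ⊆ Iv n := by
  unfold shift; split_ifs with h
  · exact Finset.insert_subset hj ((Finset.erase_subset _ _).trans hA)
  · exact hA

lemma shift_mono {i j : ℕ} {A B : Finset ℕ} (h : A ⊆ B) : shift i j A ⊆ shift i j B := by
  unfold shift; split_ifs with hA hB hB
  · exact Finset.insert_subset_insert _ (Finset.erase_subset_erase _ h)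
  · push_neg at hB
    exact Finset.insert_subset (hB (h hA.1)) ((Finset.erase_subset _ _).trans h)
  · have hiA : i ∉ A := by
      intro hiA
      exact hB.2 (by rcases not_and_or.1 hA with h' | h'; · exact absurd hiA h'
                     · exact absurd (h (not_not.1 h')) hB.2)
    intro a ha
    exact Finset.mem_insert.2 (Or.inr (Finset.mem_erase.2 ⟨fun hc => hiA (hc ▸ ha), h ha⟩))
  · exact h

lemma mem_insert_erase {i j a : ℕ} {A : Finset ℕ} :
    a ∈ insert j (A.erase i) ↔ a = j ∨ (a ≠ i ∧ a ∈ A) := by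
  simp [Finset.mem_insert, Finset.mem_erase]

lemma oppset_iff {n : ℕ} {X Y : Finset ℕ} (hX : X ⊆ Iv n) (hY : Y ⊆ Iv n) :
    OppSet n X Y ↔ (∀ a ∈ X, a ∉ Y) ∨ (∀ a ∈ Iv n, a ∈ X ∨ a ∈ Y) := by
  unfold OppSet
  constructor
  · rintro (h | h)
    · exact Or.inl fun a haX haY => by
        have : a ∈ X ∩ Y := Finset.mem_inter.2 ⟨haX, haY⟩
        simp [h] at this
    · exact Or.inr fun a ha => Finset.mem_union.1 (h ▸ ha)
  · rintro (h | h)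
    · exact Or.inl (Finset.eq_empty_of_forall_notMem fun a ha => by
        rcases Finset.mem_inter.1 ha with ⟨h1, h2⟩; exact h a h1 h2)
    · exact Or.inr (Finset.Subset.antisymm (Finset.union_subset hX hY)
        (fun a ha => Finset.mem_union.2 (h a ha)))

lemma oppset_symm {n : ℕ} {X Y : Finset ℕ} (h : OppSet n X Y) : OppSet n Y X := by
  unfold OppSet at *
  rcases h with h | h
  · exact Or.inl (by rwa [Finset.inter_comm])
  · exact Or.inr (by rwa [Finset.union_comm])
open Finset

lemma stepA {n i j : ℕ} {A B : Finset ℕ} (hi : i ∈ Iv n) (hj : j ∈ Iv n)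
    (hA : A ⊆ Iv n) (hB : B ⊆ Iv n) (hno : ¬ OppSet n A B)
    (hop : OppSet n A (shift i j B)) : i ∈ A ∧ j ∉ A ∧ i ∈ B ∧ j ∉ B := by
  by_cases hsB : i ∈ B ∧ j ∉ B
  · rw [shift_eq_of hsB] at hop
    have hB' : insert j (B.erase i) ⊆ Iv n :=
      Finset.insert_subset hj ((Finset.erase_subset _ _).trans hB)
    rw [oppset_iff hA hB'] at hop
    rw [oppset_iff hA hB] at hno
    push_neg at hno
    obtain ⟨⟨a, haA, haB⟩, b, hbIv, hbA, hbB⟩ := hno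
    rcases hop with hd | hu
    · have hjA : j ∉ A := fun hjA => hd j hjA (Finset.mem_insert_self _ _)
      have hai : a = i := by
        have := hd a haA
        rw [mem_insert_erase] at this
        push_neg at this
        by_contra hne
        exact (this.2 hne) haB
      exact ⟨hai ▸ haA, hjA, hsB⟩
    · have hjA : j ∉ A := by
        intro hjA
        rcases hu b hbIv with h | h
        · exact hbA h
        · rw [mem_insert_erase] at h
          rcases h with rfl | ⟨_, h⟩
          · exact hbA hjA
          · exact hbB h
      have hiA : i ∈ A := by
        rcases hu i hi with h | h
        · exact h
        · rw [mem_insert_erase] at h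
          rcases h with rfl | ⟨h, _⟩
          · exact absurd hsB.1 hsB.2
          · exact absurd rfl h
      exact ⟨hiA, hjA, hsB⟩
  · rw [shift_eq_self hsB] at hop
    exact absurd hop hno

lemma both_shiftable {n i j : ℕ} {A B : Finset ℕ} (hi : i ∈ Iv n) (hj : j ∈ Iv n)
    (hA : A ⊆ Iv n) (hB : B ⊆ Iv n) (hsA : i ∈ A ∧ j ∉ A) (hsB : i ∈ B ∧ j ∉ B)
    (hop : OppSet n A (shift i j B)) : OppSet n (shift i j A) B := by
  rw [shift_eq_of hsB] at hop
  rw [shift_eq_of hsA]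
  have hA' : insert j (A.erase i) ⊆ Iv n :=
    Finset.insert_subset hj ((Finset.erase_subset _ _).trans hA)
  have hB' : insert j (B.erase i) ⊆ Iv n :=
    Finset.insert_subset hj ((Finset.erase_subset _ _).trans hB)
  rw [oppset_iff hA hB'] at hop
  rw [oppset_iff hA' hB]
  rcases hop with hd | hu
  · left
    intro a ha haB
    rw [mem_insert_erase] at ha
    rcases ha with rfl | ⟨hai, haA⟩
    · exact hsB.2 haB
    · have := hd a haA
      rw [mem_insert_erase] at this
      push_neg at this
      exact (this.2 hai) haB
  · right
    intro a haIv
    rcases hu a haIv with h | h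
    · by_cases hai : a = i
      · exact Or.inr (hai ▸ hsB.1)
      · exact Or.inl (mem_insert_erase.2 (Or.inr ⟨hai, h⟩))
    · rw [mem_insert_erase] at h
      rcases h with rfl | ⟨_, h⟩
      · exact Or.inl (Finset.mem_insert_self _ _)
      · exact Or.inr h

lemma oppShift_one {n i j : ℕ} {A B : Finset ℕ} (hi : i ∈ Iv n) (hj : j ∈ Iv n)
    (hA : A ⊆ Iv n) (hB : B ⊆ Iv n) (hsA : i ∈ A ∧ j ∉ A) (hsB : ¬ (i ∈ B ∧ j ∉ B))
    (hop : OppSet n (insert j (A.erase i)) B) : OppSet n A B := by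
  have hA' : insert j (A.erase i) ⊆ Iv n :=
    Finset.insert_subset hj ((Finset.erase_subset _ _).trans hA)
  rw [oppset_iff hA' hB] at hop
  rw [oppset_iff hA hB]
  rcases hop with hd | hu
  · have hjB : j ∉ B := hd j (Finset.mem_insert_self _ _)
    have hiB : i ∉ B := (not_and_or.1 hsB).resolve_right (fun h => h hjB)
    left
    intro a haA haB
    by_cases hai : a = i
    · exact hiB (hai ▸ haB)
    · exact hd a (mem_insert_erase.2 (Or.inr ⟨hai, haA⟩)) haB
  · by_cases hjB : j ∈ B
    · right
      intro a haIv
      rcases hu a haIv with h | h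
      · rw [mem_insert_erase] at h
        rcases h with rfl | ⟨_, h⟩
        · exact Or.inr hjB
        · exact Or.inl h
      · exact Or.inr h
    · have hiB : i ∉ B := (not_and_or.1 hsB).resolve_right (fun h => h hjB)
      exfalso
      rcases hu i hi with h | h
      · rw [mem_insert_erase] at h
        rcases h with rfl | ⟨h, _⟩
        · exact hsA.2 hsA.1
        · exact h rfl
      · exact hiB h

lemma oppShift {n i j : ℕ} {A B : Finset ℕ} (hi : i ∈ Iv n) (hj : j ∈ Iv n)
    (hA : A ⊆ Iv n) (hB : B ⊆ Iv n)
    (hop : OppSet n (shift i j A) (shift i j B)) : OppSet n A B := by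
  by_cases hsA : i ∈ A ∧ j ∉ A <;> by_cases hsB : i ∈ B ∧ j ∉ B
  · rw [shift_eq_of hsA, shift_eq_of hsB] at hop
    exfalso
    have hA' : insert j (A.erase i) ⊆ Iv n :=
      Finset.insert_subset hj ((Finset.erase_subset _ _).trans hA)
    have hB' : insert j (B.erase i) ⊆ Iv n :=
      Finset.insert_subset hj ((Finset.erase_subset _ _).trans hB)
    rw [oppset_iff hA' hB'] at hop
    rcases hop with hd | hu
    · exact hd j (Finset.mem_insert_self _ _) (Finset.mem_insert_self _ _)
    · have hij : i ≠ j := fun h => hsA.2 (h ▸ hsA.1)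
      rcases hu i hi with h | h <;>
      · rw [mem_insert_erase] at h
        rcases h with h | ⟨h, _⟩
        · exact hij h
        · exact h rfl
  · rw [shift_eq_of hsA, shift_eq_self hsB] at hop
    exact oppShift_one hi hj hA hB hsA hsB hop
  · rw [shift_eq_self hsA, shift_eq_of hsB] at hop
    exact oppset_symm (oppShift_one hi hj hB hA hsB hsA (oppset_symm hop))
  · rwa [shift_eq_self hsA, shift_eq_self hsB] at hop

lemma flag_shift {n i j : ℕ} {T : Finset ℕ} {f : Finset (Finset ℕ)}
    (hi : i ∈ Iv n) (hj : j ∈ Iv n) (hf : IsFlagT n T f) :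
    IsFlagT n T (shiftFlag i j f) := by
  obtain ⟨hmem, hchain, hcard⟩ := hf
  refine ⟨?_, ?_, ?_⟩
  · intro X hX
    obtain ⟨A, hA, rfl⟩ := Finset.mem_image.1 hX
    obtain ⟨hAiv, hAne, hAproper⟩ := hmem A hA
    refine ⟨shift_subset_Iv hAiv hj, ?_, ?_⟩
    · rw [← Finset.card_pos, shift_card, Finset.card_pos]; exact hAne
    · intro hEq
      have h1 : A.card < (Iv n).card :=
        Finset.card_lt_card (Finset.ssubset_iff_subset_ne.2 ⟨hAiv, hAproper⟩)
      rw [← shift_card i j A, hEq] at h1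
      omega
  · intro X hX Y hY
    obtain ⟨A, hA, rfl⟩ := Finset.mem_image.1 hX
    obtain ⟨B, hB, rfl⟩ := Finset.mem_image.1 hY
    rcases hchain A hA B hB with h | h
    · exact Or.inl (shift_mono h)
    · exact Or.inr (shift_mono h)
  · rw [shiftFlag, Finset.image_image]
    rw [show Finset.card ∘ shift i j = Finset.card from funext (shift_card i j)]
    exact hcard

lemma mixed {n i j : ℕ} {T : Finset ℕ} (hi : i ∈ Iv n) (hj : j ∈ Iv n)
    {f f' : Finset (Finset ℕ)} (hf : IsFlagT n T f) (hf' : IsFlagT n T f')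
    (h1 : ¬ OppFlags n f f') (h2 : ¬ OppFlags n (shiftFlag i j f) f') :
    ¬ OppFlags n f (shiftFlag i j f') := by
  intro H
  unfold OppFlags at h1 h2
  push_neg at h1 h2
  obtain ⟨X, hXf, X', hX'f', hnXX'⟩ := h1
  obtain ⟨Y, hYsf, W', hW'f', hnYW'⟩ := h2
  obtain ⟨Z, hZf, rfl⟩ := Finset.mem_image.1 hYsf
  have hXX' := H X hXf (shift i j X') (Finset.mem_image_of_mem _ hX'f')
  have hZW' := H Z hZf (shift i j W') (Finset.mem_image_of_mem _ hW'f')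
  have hXiv := (hf.1 X hXf).1
  have hZiv := (hf.1 Z hZf).1
  have hX'iv := (hf'.1 X' hX'f').1
  have hW'iv := (hf'.1 W' hW'f').1
  obtain ⟨hiX, hjX, hiX', hjX'⟩ := stepA hi hj hXiv hX'iv hnXX' hXX'
  -- Step 1: W' is not shiftable
  have hsW : ¬ (i ∈ W' ∧ j ∉ W') := by
    intro hsW
    by_cases hsZ : i ∈ Z ∧ j ∉ Z
    · exact hnYW' (both_shiftable hi hj hZiv hW'iv hsZ hsW hZW')
    · rw [shift_eq_self hsZ] at hnYW'
      obtain ⟨h1, h2, _, _⟩ := stepA hi hj hZiv hW'iv hnYW' hZW'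
      exact hsZ ⟨h1, h2⟩
  -- Step 2
  rw [shift_eq_self hsW] at hZW'
  have hsZ : i ∈ Z ∧ j ∉ Z := by
    by_contra hsZ
    rw [shift_eq_self hsZ] at hnYW'
    exact hnYW' hZW'
  rw [shift_eq_of hsZ] at hnYW'
  have hZ' : insert j (Z.erase i) ⊆ Iv n :=
    Finset.insert_subset hj ((Finset.erase_subset _ _).trans hZiv)
  rw [oppset_iff hZ' hW'iv] at hnYW'
  rw [oppset_iff hZiv hW'iv] at hZW'
  push_neg at hnYW'
  obtain ⟨⟨a, haI, haW⟩, b, hbIv, hbI, hbW⟩ := hnYW'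
  have hcomp := hf'.2.1 X' hX'f' W' hW'f'
  -- in both cases below we derive i ∉ W' and j ∈ W', then contradict via the chain
  have hfinal : i ∉ W' → j ∈ W' → False := by
    intro hiW hjW
    rcases hcomp with h | h
    · exact hiW (h hiX')
    · exact hjX' (h hjW)
  rcases hZW' with hd | hu
  · -- Z ∩ W' = ∅
    have hiW : i ∉ W' := fun h => hd i hsZ.1 h
    have hjW : j ∈ W' := by
      rw [mem_insert_erase] at haI
      rcases haI with rfl | ⟨_, haZ⟩
      · exact haW
      · exact absurd haW (hd a haZ)
    exact hfinal hiW hjW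
  · -- Z ∪ W' = Iv n
    have hbi : b = i := by
      rcases hu b hbIv with h | h
      · by_contra hne
        exact hbI (mem_insert_erase.2 (Or.inr ⟨hne, h⟩))
      · exact absurd h hbW
    have hiW : i ∉ W' := hbi ▸ hbW
    have hjW : j ∈ W' := by
      rcases hu j hj with h | h
      · exact absurd h hsZ.2
      · exact h
    exact hfinal hiW hjW

lemma shift_eq_cases {i j : ℕ} {A B : Finset ℕ} (h : shift i j A = shift i j B) :
    A = B ∨ (i ∈ A ∧ j ∉ A ∧ B = insert j (A.erase i)) ∨
      (i ∈ B ∧ j ∉ B ∧ A = insert j (B.erase i)) := by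
  by_cases hsA : i ∈ A ∧ j ∉ A <;> by_cases hsB : i ∈ B ∧ j ∉ B
  · left
    rw [shift_eq_of hsA, shift_eq_of hsB] at h
    have hjA : j ∉ A.erase i := fun hc => hsA.2 (Finset.mem_of_mem_erase hc)
    have hjB : j ∉ B.erase i := fun hc => hsB.2 (Finset.mem_of_mem_erase hc)
    have h2 : A.erase i = B.erase i := by
      rw [← Finset.erase_insert hjA, ← Finset.erase_insert hjB, h]
    rw [← Finset.insert_erase hsA.1, ← Finset.insert_erase hsB.1, h2]
  · right; left
    rw [shift_eq_of hsA, shift_eq_self hsB] at h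
    exact ⟨hsA.1, hsA.2, h.symm⟩
  · right; right
    rw [shift_eq_self hsA, shift_eq_of hsB] at h
    exact ⟨hsB.1, hsB.2, h⟩
  · left
    rwa [shift_eq_self hsA, shift_eq_self hsB] at h

lemma flag_unshiftable {n i j : ℕ} {T : Finset ℕ} {f' : Finset (Finset ℕ)}
    (hf' : IsFlagT n T f') {X' : Finset ℕ} (hX' : X' ∈ f')
    {X : Finset ℕ} (hiX : i ∈ X) (hjX : j ∉ X) (hX'eq : X' = insert j (X.erase i)) :
    shiftFlag i j f' = f' := by
  have hall : ∀ Y ∈ f', shift i j Y = Y := by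
    intro Y hY
    apply shift_eq_self
    rintro ⟨hiY, hjY⟩
    have hij : i ≠ j := fun h => hjY (h ▸ hiY)
    rcases hf'.2.1 Y hY X' hX' with h | h
    · have : i ∈ X' := h hiY
      rw [hX'eq, mem_insert_erase] at this
      rcases this with h' | ⟨h', _⟩
      · exact hij h'
      · exact h' rfl
    · have : j ∈ Y := h (by rw [hX'eq]; exact Finset.mem_insert_self _ _)
      exact hjY this
  calc shiftFlag i j f' = f'.image id := Finset.image_congr (fun Y hY => hall Y hY)
    _ = f' := Finset.image_id

lemma shiftFlag_inj_aux {n i j : ℕ} {T : Finset ℕ} {f f' : Finset (Finset ℕ)}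
    (hf : IsFlagT n T f) (hf' : IsFlagT n T f')
    (h : shiftFlag i j f = shiftFlag i j f') (X : Finset ℕ) (hXf : X ∈ f) (hXf' : X ∉ f') :
    shiftFlag i j f = f ∨ shiftFlag i j f' = f' := by
  have hmem : shift i j X ∈ shiftFlag i j f' := h ▸ Finset.mem_image_of_mem _ hXf
  obtain ⟨X', hX'f', hX'eq⟩ := Finset.mem_image.1 hmem
  rcases shift_eq_cases (hX'eq.symm : shift i j X = shift i j X') with heq | ⟨h1, h2, h3⟩ | ⟨h1, h2, h3⟩
  · subst heq; exact absurd hX'f' hXf'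
  · exact Or.inr (flag_unshiftable hf' hX'f' h1 h2 h3)
  · exact Or.inl (flag_unshiftable hf hXf h1 h2 h3)

lemma shiftFlag_inj {n i j : ℕ} {T : Finset ℕ} {f f' : Finset (Finset ℕ)}
    (hf : IsFlagT n T f) (hf' : IsFlagT n T f')
    (h : shiftFlag i j f = shiftFlag i j f') :
    f = f' ∨ shiftFlag i j f = f ∨ shiftFlag i j f' = f' := by
  by_cases hff' : f = f'
  · exact Or.inl hff'
  · right
    have : ¬ (f ⊆ f') ∨ ¬ (f' ⊆ f) := by
      by_contra hc
      push_neg at hc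
      exact hff' (Finset.Subset.antisymm hc.1 hc.2)
    rcases this with hc | hc
    · obtain ⟨X, hXf, hXf'⟩ := Finset.not_subset.1 hc
      exact shiftFlag_inj_aux hf hf' h X hXf hXf'
    · obtain ⟨X, hXf', hXf⟩ := Finset.not_subset.1 hc
      exact (shiftFlag_inj_aux hf' hf h.symm X hXf' hXf).symm

/-- the `i,j`-shift of an independent set of flags of type `T` is again
an independent set of flags of type `T` of the same size. -/
theorem stmt_8 (n : ℕ) (T : Finset ℕ) (i j : ℕ) (hi : i ∈ Iv n) (hj : j ∈ Iv n)
    (F : Finset (Finset (Finset ℕ))) (hflags : ∀ f ∈ F, IsFlagT n T f)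
    (hindep : IndepT n F) :
    (∀ f ∈ shiftFam i j F, IsFlagT n T f) ∧ IndepT n (shiftFam i j F) ∧
      (shiftFam i j F).card = F.card := by
  refine ⟨?_, ?_, ?_⟩
  · intro g hg
    obtain ⟨f, hfF, rfl⟩ := Finset.mem_image.1 hg
    split_ifs with c
    · exact hflags f hfF
    · exact flag_shift hi hj (hflags f hfF)
  · intro g hg g' hg' Hopp
    obtain ⟨f, hfF, rfl⟩ := Finset.mem_image.1 hg
    obtain ⟨f', hf'F, rfl⟩ := Finset.mem_image.1 hg'
    by_cases c : shiftFlag i j f ∈ F <;> by_cases c' : shiftFlag i j f' ∈ F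
    · rw [if_pos c, if_pos c'] at Hopp
      exact hindep f hfF f' hf'F Hopp
    · rw [if_pos c, if_neg c'] at Hopp
      exact mixed hi hj (hflags f hfF) (hflags f' hf'F) (hindep f hfF f' hf'F)
        (hindep _ c f' hf'F) Hopp
    · rw [if_neg c, if_pos c'] at Hopp
      have Hopp' : OppFlags n f' (shiftFlag i j f) :=
        fun X hX Y hY => oppset_symm (Hopp Y hY X hX)
      refine mixed hi hj (hflags f' hf'F) (hflags f hfF) ?_ (hindep _ c' f hfF) Hopp'
      intro hc
      exact hindep f hfF f' hf'F (fun X hX Y hY => oppset_symm (hc Y hY X hX))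
    · rw [if_neg c, if_neg c'] at Hopp
      have hne := hindep f hfF f' hf'F
      unfold OppFlags at hne
      push_neg at hne
      obtain ⟨X, hX, X', hX', hn⟩ := hne
      exact hn (oppShift hi hj ((hflags f hfF).1 X hX).1 ((hflags f' hf'F).1 X' hX').1
        (Hopp _ (Finset.mem_image_of_mem _ hX) _ (Finset.mem_image_of_mem _ hX')))
  · rw [shiftFam]
    apply Finset.card_image_of_injOn
    intro f1 h1 f2 h2 heq
    simp only at heq
    by_cases c1 : shiftFlag i j f1 ∈ F <;> by_cases c2 : shiftFlag i j f2 ∈ F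
    · rwa [if_pos c1, if_pos c2] at heq
    · rw [if_pos c1, if_neg c2] at heq
      exact absurd (heq ▸ h1) c2
    · rw [if_neg c1, if_pos c2] at heq
      exact absurd (heq.symm ▸ h2) c1
    · rw [if_neg c1, if_neg c2] at heq
      rcases shiftFlag_inj (hflags f1 h1) (hflags f2 h2) heq with h | h | h
      · exact h
      · exact absurd (by rwa [h]) c1
      · exact absurd (by rwa [h]) c2
end

section
/- Let n ≥ 7 and let ℱ be an independent set of flags of type {1,n−3} of [n] containing flags (A₁,B₁) and (A₂,B₂) with A₁ = A₂, B₁ ≠ B₂, and |[n] \ (B₁ ∪ B₂)| = 2. Then every singleton A ⊆ [n] \ (B₁ ∪ B₂) has ℱ-weight at most C(n−1,3) − (n−5)(n−4) + C(n−5,2). -/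
open Finset

/-!
A flag `(A, B)` counted by the weight of `A` is determined by its complement `C = [n] \ B`, a
3-subset of `[n] \ A`. For any `(A₀, B₀) ∈ ℱ` with `A ∩ B₀ = ∅`, the set `C` cannot satisfy
`A₀ ⊆ C ⊆ B₀`, since then the two flags would be opposite. For the two given flags, with common
point `A₀ = {a₀}`, this excludes the 3-sets `C ∋ a₀` inside `B₁` or inside `B₂`; as
`|B₁ ∩ B₂| = n - 4`, inclusion–exclusion counts `2 C(n-4,2) - C(n-5,2)` of them among the
`C(n-1,3)` candidates.
-/

section
variable {α : Type*} [DecidableEq α]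

lemma card_inter_add_card_eq {s t u : Finset α} (hs : s ⊆ u) (ht : t ⊆ u) :
    #(s ∩ t) + #u = #s + #t + #(u \ (s ∪ t)) := by
  have := card_union_add_card_inter s t
  have := card_sdiff_add_card_eq_card (union_subset hs ht)
  omega

def sandwich (k : ℕ) (A B : Finset α) : Finset (Finset α) :=
  {C ∈ B.powersetCard k | A ⊆ C}

lemma card_sandwich {k : ℕ} {A B : Finset α} (hAB : A ⊆ B) (hk : #A ≤ k) :
    #(sandwich k A B) = (#B - #A).choose (k - #A) :=
  card_filter_powersetCard_subset A B k hAB hk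

lemma sandwich_inter_sandwich (k : ℕ) (A B B' : Finset α) :
    sandwich k A B ∩ sandwich k A B' = sandwich k A (B ∩ B') := by
  ext C
  simp only [sandwich, mem_inter, mem_filter, mem_powersetCard, subset_inter_iff]
  tauto

lemma sandwich_subset_powersetCard {k : ℕ} {A B S : Finset α} (hBS : B ⊆ S) :
    sandwich k A B ⊆ S.powersetCard k :=
  (filter_subset _ _).trans (powersetCard_mono hBS)

end

lemma oppFlag_of_sdiff_subset {n : ℕ} {f g : Finset ℕ × Finset ℕ} (hf : f.2 ⊆ Iv n)
    (hg : g.2 ⊆ Iv n) (hfg : Disjoint f.1 g.2) (hgC : g.1 ⊆ Iv n \ f.2)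
    (hCg : Iv n \ f.2 ⊆ g.2) : OppFlag n f g :=
  ⟨(union_subset hf hg).antisymm (sdiff_le_iff.mp hCg),
    disjoint_iff_inter_eq_empty.mp hfg,
    disjoint_iff_inter_eq_empty.mp (subset_sdiff.mp hgC).2⟩

lemma weightA_le_card_sdiff_biUnion_sandwich {n a b : ℕ} {F : Finset (Finset ℕ × Finset ℕ)}
    (hF : ∀ f ∈ F, IsFlag n a b f) (hind : Indep n F) {A : Finset ℕ}
    {G : Finset (Finset ℕ × Finset ℕ)} (hGF : G ⊆ F) (hAG : ∀ g ∈ G, Disjoint A g.2) :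
    weightA F A ≤
      #((Iv n \ A).powersetCard (n - b) \ G.biUnion fun g => sandwich (n - b) g.1 g.2) := by
  have hIv : #(Iv n) = n := by simp [Iv]
  refine card_le_card_of_injOn (fun f => Iv n \ f.2) ?_ ?_
  · intro f hf
    obtain ⟨hfF, rfl⟩ := mem_filter.mp hf
    obtain ⟨hAB, hBIv, -, hBcard⟩ := hF f hfF
    simp only [mem_coe, mem_sdiff, mem_powersetCard, mem_biUnion, sandwich, mem_filter,
      not_exists, not_and]
    refine ⟨⟨sdiff_subset_sdiff le_rfl hAB, by rw [card_sdiff_of_subset hBIv, hIv, hBcard]⟩, ?_⟩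
    rintro g hg ⟨hCg, -⟩ hgC
    exact hind f hfF g (hGF hg)
      (oppFlag_of_sdiff_subset hBIv (hF g (hGF hg)).2.1 (hAG g hg) hgC hCg)
  · intro f hf g hg hfg
    obtain ⟨hfF, hfA⟩ := mem_filter.mp hf
    obtain ⟨hgF, hgA⟩ := mem_filter.mp hg
    refine Prod.ext (hfA.trans hgA.symm) ?_
    rw [← Finset.sdiff_sdiff_eq_self (hF f hfF).2.1, ← Finset.sdiff_sdiff_eq_self (hF g hgF).2.1]
    exact congrArg (Iv n \ ·) hfg

theorem stmt_10_general (n : ℕ) (hn : 7 ≤ n)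
    (F : Finset (Finset ℕ × Finset ℕ)) (hflags : ∀ f ∈ F, IsFlag n 1 (n - 3) f)
    (hindep : Indep n F)
    (f₁ f₂ : Finset ℕ × Finset ℕ) (hf₁ : f₁ ∈ F) (hf₂ : f₂ ∈ F)
    (hA : f₁.1 = f₂.1)
    (hcompl : (Iv n \ (f₁.2 ∪ f₂.2)).card = 2)
    (A : Finset ℕ) (hA1 : A.card = 1) (hAsub : A ⊆ Iv n \ (f₁.2 ∪ f₂.2)) :
    weightA F A ≤ Nat.choose (n - 1) 3 - (n - 5) * (n - 4) + Nat.choose (n - 5) 2 := by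
  obtain ⟨hsub₁, hB₁, hcard₁, hBcard₁⟩ := hflags f₁ hf₁
  obtain ⟨hsub₂, hB₂, -, hBcard₂⟩ := hflags f₂ hf₂
  obtain ⟨hAIv, hdisj₁, hdisj₂⟩ : A ⊆ Iv n ∧ Disjoint A f₁.2 ∧ Disjoint A f₂.2 := by
    rw [← disjoint_union_right, ← subset_sdiff]; exact hAsub
  have hIv : #(Iv n) = n := by simp [Iv]
  have hk : n - (n - 3) = 3 := by omega
  have hbound := weightA_le_card_sdiff_biUnion_sandwich hflags hindep (A := A) (G := {f₁, f₂})
    (by simp [insert_subset_iff, hf₁, hf₂]) (by simp [hdisj₁, hdisj₂])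
  rw [biUnion_insert, singleton_biUnion, ← hA, hk, card_sdiff_of_subset (union_subset
    (sandwich_subset_powersetCard (subset_sdiff.mpr ⟨hB₁, hdisj₁.symm⟩))
    (sandwich_subset_powersetCard (subset_sdiff.mpr ⟨hB₂, hdisj₂.symm⟩))),
    card_powersetCard, card_sdiff_of_subset hAIv, hIv, hA1] at hbound
  have hinter : #(f₁.2 ∩ f₂.2) = n - 4 := by
    have := card_inter_add_card_eq hB₁ hB₂
    omega
  rw [← hA] at hsub₂
  have hunion := card_union_add_card_inter (sandwich 3 f₁.1 f₁.2) (sandwich 3 f₁.1 f₂.2)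
  rw [sandwich_inter_sandwich, card_sandwich (subset_inter hsub₁ hsub₂) (by omega),
    card_sandwich hsub₁ (by omega), card_sandwich hsub₂ (by omega), hinter, hcard₁, hBcard₁,
    hBcard₂] at hunion
  have htwice : (n - 4) * (n - 5) = (n - 4).choose 2 * 2 := by
    simpa [show n - 5 + 1 = n - 4 by omega] using Nat.add_one_mul_choose_eq (n - 5) 1
  simp only [show n - 3 - 1 = n - 4 by omega, show n - 4 - 1 = n - 5 by omega,
    show 3 - 1 = 2 from rfl] at hunion
  rw [mul_comm (n - 5)]
  omega

/-- if an independent set `ℱ` of flags of type `{1,n−3}` (`n ≥ 7`)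
contains `(A₁,B₁)`, `(A₂,B₂)` with `A₁ = A₂`, `B₁ ≠ B₂`, `|[n] \ (B₁ ∪ B₂)| = 2`,
then every singleton `A ⊆ [n] \ (B₁ ∪ B₂)` has weight at most
`C(n−1,3) − (n−5)(n−4) + C(n−5,2)`. -/
theorem stmt_10 (n : ℕ) (hn : 7 ≤ n)
    (F : Finset (Finset ℕ × Finset ℕ)) (hflags : ∀ f ∈ F, IsFlag n 1 (n - 3) f)
    (hindep : Indep n F)
    (f₁ f₂ : Finset ℕ × Finset ℕ) (hf₁ : f₁ ∈ F) (hf₂ : f₂ ∈ F)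
    (hA : f₁.1 = f₂.1) (hBne : f₁.2 ≠ f₂.2)
    (hcompl : (Iv n \ (f₁.2 ∪ f₂.2)).card = 2)
    (A : Finset ℕ) (hA1 : A.card = 1) (hAsub : A ⊆ Iv n \ (f₁.2 ∪ f₂.2)) :
    weightA F A ≤ Nat.choose (n - 1) 3 - (n - 5) * (n - 4) + Nat.choose (n - 5) 2 :=
  stmt_10_general n hn F hflags hindep f₁ f₂ hf₁ hf₂ hA hcompl A hA1 hAsub
end

section
/- Let n ≥ 7 and let ℱ be an independent set of flags of type {1,n−3} of [n]. If B₁ ⊆ [n] with |B₁| = n−3 has ℱ-weight n−3 (maximal weight), then every singleton A ⊆ [n] \ B₁ has ℱ-weight at most C(n−1,3) − C(n−3,3). -/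
/-!
Since `B₁` has maximal weight, every flag `({a}, B₁)` with `a ∈ B₁` lies in `ℱ`. For a flag
`(A, B) ∈ ℱ` with `A` disjoint from `B₁`, the complementary `3`-set `[n] \ B` therefore cannot
lie inside `B₁`: any of its points `a` would make `({a}, B₁)` opposite to `(A, B)`. So
`B ↦ [n] \ B` maps the flags of `ℱ` with first component `A` injectively to the `3`-subsets of
`[n] \ A` that are not `3`-subsets of `B₁`, and there are `C(n-1,3) - C(n-3,3)` of those.
-/

open Finset

lemma IsFlag.card_le {n a b : ℕ} {f : Finset ℕ × Finset ℕ} (hf : IsFlag n a b f) : a ≤ b :=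
  hf.2.2.1 ▸ hf.2.2.2 ▸ card_le_card hf.1

lemma IsFlag.card_compl_snd {n a b : ℕ} {f : Finset ℕ × Finset ℕ} (hf : IsFlag n a b f) :
    #(Iv n \ f.2) = n - b := by
  rw [card_sdiff_of_subset hf.2.1, hf.2.2.2, Iv, Nat.card_Icc, Nat.add_sub_cancel]

lemma singleton_mem_of_weightB_eq_card {n b : ℕ} {F : Finset (Finset ℕ × Finset ℕ)}
    (hflags : ∀ f ∈ F, IsFlag n 1 b f) {B : Finset ℕ} (hw : weightB F B = #B)
    {a : ℕ} (ha : a ∈ B) : ({a}, B) ∈ F := by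
  set G := F.filter (fun f => f.2 = B)
  have hinj : Set.InjOn Prod.fst (G : Set (Finset ℕ × Finset ℕ)) := fun f hf g hg hfg =>
    Prod.ext hfg ((mem_filter.1 hf).2.trans (mem_filter.1 hg).2.symm)
  have himage : G.image Prod.fst = B.powersetCard 1 := by
    refine eq_of_subset_of_card_le (fun s hs => ?_) ?_
    · obtain ⟨f, hf, rfl⟩ := mem_image.1 hs
      obtain ⟨hfF, rfl⟩ := mem_filter.1 hf
      exact mem_powersetCard.2 ⟨(hflags f hfF).1, (hflags f hfF).2.2.1⟩
    · rw [card_powersetCard, Nat.choose_one_right, card_image_of_injOn hinj]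
      exact hw.ge
  have hmem : ({a} : Finset ℕ) ∈ G.image Prod.fst :=
    himage ▸ mem_powersetCard.2 ⟨singleton_subset_iff.2 ha, card_singleton a⟩
  obtain ⟨f, hf, hfa⟩ := mem_image.1 hmem
  obtain ⟨hfF, hfB⟩ := mem_filter.1 hf
  exact (Prod.ext hfa hfB : f = ({a}, B)) ▸ hfF

lemma Indep.not_sdiff_snd_subset {n : ℕ} {F : Finset (Finset ℕ × Finset ℕ)} (hindep : Indep n F)
    {B : Finset ℕ} (hB : B ⊆ Iv n) (hfull : ∀ a ∈ B, ({a}, B) ∈ F)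
    {f : Finset ℕ × Finset ℕ} (hf : f ∈ F) (hf2 : f.2 ⊆ Iv n) (hdisj : Disjoint f.1 B)
    (hne : (Iv n \ f.2).Nonempty) : ¬ Iv n \ f.2 ⊆ B := by
  intro hsub
  obtain ⟨a, ha⟩ := hne
  have hunion : f.2 ∪ B = Iv n := by
    refine (union_subset hf2 hB).antisymm fun x hx => ?_
    by_cases hx2 : x ∈ f.2
    · exact mem_union_left _ hx2
    · exact mem_union_right _ (hsub (mem_sdiff.2 ⟨hx, hx2⟩))
  exact hindep f hf ({a}, B) (hfull a (hsub ha)) ⟨hunion, disjoint_iff_inter_eq_empty.1 hdisj,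
    singleton_inter_of_notMem (mem_sdiff.1 ha).2⟩

lemma weightA_le_card_powersetCard_sdiff {n k : ℕ} (hk : 0 < k)
    {F : Finset (Finset ℕ × Finset ℕ)} (hflags : ∀ f ∈ F, IsFlag n 1 (n - k) f)
    (hindep : Indep n F) {B : Finset ℕ} (hB : B ⊆ Iv n) (hfull : ∀ a ∈ B, ({a}, B) ∈ F)
    {A : Finset ℕ} (hAB : Disjoint A B) :
    weightA F A ≤ #((Iv n \ A).powersetCard k \ B.powersetCard k) := by
  refine card_le_card_of_injOn (fun f => Iv n \ f.2) (fun f hf => ?_) (fun f hf g hg hfg => ?_)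
  · obtain ⟨hfF, rfl⟩ := mem_filter.1 hf
    have hflag := hflags f hfF
    have hcard : #(Iv n \ f.2) = k := by
      have := hflag.card_le
      have := hflag.card_compl_snd
      omega
    have hsub : Iv n \ f.2 ⊆ Iv n \ f.1 := sdiff_subset_sdiff le_rfl hflag.1
    refine mem_sdiff.2 ⟨mem_powersetCard.2 ⟨hsub, hcard⟩, fun hB' => ?_⟩
    exact hindep.not_sdiff_snd_subset hB hfull hfF hflag.2.1 hAB (card_pos.1 (hcard ▸ hk))
      (mem_powersetCard.1 hB').1
  · obtain ⟨hfF, hfA⟩ := mem_filter.1 hf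
    obtain ⟨hgF, hgA⟩ := mem_filter.1 hg
    refine Prod.ext (hfA.trans hgA.symm) ?_
    rw [← Finset.sdiff_sdiff_eq_self (hflags f hfF).2.1,
      ← Finset.sdiff_sdiff_eq_self (hflags g hgF).2.1]
    exact congrArg (Iv n \ ·) hfg

theorem stmt_11_general (n : ℕ)
    (F : Finset (Finset ℕ × Finset ℕ)) (hflags : ∀ f ∈ F, IsFlag n 1 (n - 3) f)
    (hindep : Indep n F)
    (B₁ : Finset ℕ) (hB₁ : B₁ ⊆ Iv n) (hB₁card : B₁.card = n - 3)
    (hw : weightB F B₁ = n - 3)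
    (A : Finset ℕ) (hA1 : A.card = 1) (hAsub : A ⊆ Iv n \ B₁) :
    weightA F A ≤ Nat.choose (n - 1) 3 - Nat.choose (n - 3) 3 := by
  have hfull : ∀ a ∈ B₁, ({a}, B₁) ∈ F := fun a ha =>
    singleton_mem_of_weightB_eq_card hflags (hw.trans hB₁card.symm) ha
  obtain ⟨hA, hAB⟩ := subset_sdiff.1 hAsub
  have hB₁A : B₁ ⊆ Iv n \ A := subset_sdiff.2 ⟨hB₁, hAB.symm⟩
  calc weightA F A ≤ #((Iv n \ A).powersetCard 3 \ B₁.powersetCard 3) :=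
        weightA_le_card_powersetCard_sdiff three_pos hflags hindep hB₁ hfull hAB
    _ = #((Iv n \ A).powersetCard 3) - #(B₁.powersetCard 3) :=
        card_sdiff_of_subset (powersetCard_mono hB₁A)
    _ = Nat.choose (n - 1) 3 - Nat.choose (n - 3) 3 := by
        rw [card_powersetCard, card_powersetCard, card_sdiff_of_subset hA, hA1, hB₁card, Iv,
          Nat.card_Icc, Nat.add_sub_cancel]

/-- if `B₁` is an `(n−3)`-set of maximal `ℱ`-weight `n−3` in an
independent set `ℱ` of flags of type `{1,n−3}` (`n ≥ 7`), then every singleton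
`A ⊆ [n] \ B₁` has weight at most `C(n−1,3) − C(n−3,3)`. -/
theorem stmt_11 (n : ℕ) (hn : 7 ≤ n)
    (F : Finset (Finset ℕ × Finset ℕ)) (hflags : ∀ f ∈ F, IsFlag n 1 (n - 3) f)
    (hindep : Indep n F)
    (B₁ : Finset ℕ) (hB₁ : B₁ ⊆ Iv n) (hB₁card : B₁.card = n - 3)
    (hw : weightB F B₁ = n - 3)
    (A : Finset ℕ) (hA1 : A.card = 1) (hAsub : A ⊆ Iv n \ B₁) :
    weightA F A ≤ Nat.choose (n - 1) 3 - Nat.choose (n - 3) 3 :=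
  stmt_11_general n F hflags hindep B₁ hB₁ hB₁card hw A hA1 hAsub
end

section
/- Let n ≥ 8 and let ℱ be an independent set of flags of type {1,n−3} of [n]. Suppose B₁ ≠ B₂ are (n−3)-subsets of [n], each of ℱ-weight n−3, with |[n] \ (B₁ ∪ B₂)| = 2. Then every singleton A ⊆ [n] \ (B₁ ∪ B₂) has ℱ-weight at most C(n−1,3) − 2·C(n−3,3) + C(n−4,3). -/
open Finset

lemma full_weight {n : ℕ} {F : Finset (Finset ℕ × Finset ℕ)}
    (hflags : ∀ f ∈ F, IsFlag n 1 (n - 3) f) {B : Finset ℕ} (hBcard : B.card = n - 3)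
    (hw : weightB F B = n - 3) {x : ℕ} (hx : x ∈ B) : ({x}, B) ∈ F := by
  classical
  set G := F.filter (fun f => f.2 = B) with hG
  have hinj : Set.InjOn (fun f : Finset ℕ × Finset ℕ => f.1) G := by
    intro f hf g hg h
    simp only [hG, Finset.coe_filter, Set.mem_setOf_eq] at hf hg
    exact Prod.ext h (hf.2.trans hg.2.symm)
  have himg : G.image (fun f => f.1) ⊆ B.powersetCard 1 := by
    intro s hs
    simp only [Finset.mem_image] at hs
    obtain ⟨f, hf, rfl⟩ := hs
    rw [hG, Finset.mem_filter] at hf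
    rw [Finset.mem_powersetCard]
    exact ⟨hf.2 ▸ (hflags f hf.1).1, (hflags f hf.1).2.2.1⟩
  have hcard : (G.image (fun f => f.1)).card = n - 3 := by
    rw [Finset.card_image_of_injOn hinj]; exact hw
  have heq : G.image (fun f => f.1) = B.powersetCard 1 := by
    apply Finset.eq_of_subset_of_card_le himg
    rw [hcard, Finset.card_powersetCard, hBcard, Nat.choose_one_right]
  have hmem : ({x} : Finset ℕ) ∈ G.image (fun f => f.1) := by
    rw [heq, Finset.mem_powersetCard]
    exact ⟨Finset.singleton_subset_iff.2 hx, Finset.card_singleton x⟩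
  simp only [Finset.mem_image] at hmem
  obtain ⟨f, hf, hf1⟩ := hmem
  rw [hG, Finset.mem_filter] at hf
  have : f = ({x}, B) := Prod.ext hf1 hf.2
  exact this ▸ hf.1

/-- if `B₁ ≠ B₂` are `(n−3)`-sets, each of maximal `ℱ`-weight `n−3`, with
`|[n] \ (B₁ ∪ B₂)| = 2`, in an independent set `ℱ` of flags of type `{1,n−3}` (`n ≥ 8`),
then every singleton `A ⊆ [n] \ (B₁ ∪ B₂)` has weight at most
`C(n−1,3) − 2·C(n−3,3) + C(n−4,3)`. -/
theorem stmt_12 (n : ℕ) (hn : 8 ≤ n)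
    (F : Finset (Finset ℕ × Finset ℕ)) (hflags : ∀ f ∈ F, IsFlag n 1 (n - 3) f)
    (hindep : Indep n F)
    (B₁ B₂ : Finset ℕ) (hB₁ : B₁ ⊆ Iv n) (hB₂ : B₂ ⊆ Iv n) (hne : B₁ ≠ B₂)
    (hB₁card : B₁.card = n - 3) (hB₂card : B₂.card = n - 3)
    (hw₁ : weightB F B₁ = n - 3) (hw₂ : weightB F B₂ = n - 3)
    (hcompl : (Iv n \ (B₁ ∪ B₂)).card = 2)
    (A : Finset ℕ) (hA1 : A.card = 1) (hAsub : A ⊆ Iv n \ (B₁ ∪ B₂)) :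
    weightA F A ≤ Nat.choose (n - 1) 3 - 2 * Nat.choose (n - 3) 3 + Nat.choose (n - 4) 3 := by
  classical
  have hIv : (Iv n).card = n := by simp [Iv]
  obtain ⟨a, rfl⟩ := Finset.card_eq_one.mp hA1
  have ha := hAsub (Finset.mem_singleton_self a)
  rw [Finset.mem_sdiff, Finset.mem_union] at ha
  push_neg at ha
  obtain ⟨haIv, haB₁, haB₂⟩ := ha
  have hsub : B₁ ∪ B₂ ⊆ Iv n := Finset.union_subset hB₁ hB₂
  have hUcard : (B₁ ∪ B₂).card = n - 2 := by
    have h1 := Finset.card_sdiff_of_subset hsub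
    have h2 := Finset.card_le_card hsub
    omega
  have hIcard : (B₁ ∩ B₂).card = n - 4 := by
    have h3 := Finset.card_union_add_card_inter B₁ B₂
    have h4 := Finset.card_le_card (Finset.inter_subset_left : B₁ ∩ B₂ ⊆ B₁)
    omega
  set X := Iv n \ {a} with hX
  have hXcard : X.card = n - 1 := by
    rw [hX, Finset.card_sdiff_of_subset (Finset.singleton_subset_iff.2 haIv), hIv,
      Finset.card_singleton]
  have hB₁X : B₁ ⊆ X := by
    rw [hX, Finset.subset_sdiff]
    exact ⟨hB₁, by simp [Finset.disjoint_singleton_right, haB₁]⟩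
  have hB₂X : B₂ ⊆ X := by
    rw [hX, Finset.subset_sdiff]
    exact ⟨hB₂, by simp [Finset.disjoint_singleton_right, haB₂]⟩
  set P := X.powersetCard 3 with hP
  have hfilt : ∀ (B : Finset ℕ), B ⊆ X →
      P.filter (fun C => C ⊆ B) = B.powersetCard 3 := by
    intro B hBX
    ext C
    simp only [hP, Finset.mem_filter, Finset.mem_powersetCard]
    constructor
    · rintro ⟨⟨_, h3⟩, hB⟩; exact ⟨hB, h3⟩
    · rintro ⟨hB, h3⟩; exact ⟨⟨hB.trans hBX, h3⟩, hB⟩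
  have hinter : (P.filter (fun C => C ⊆ B₁)) ∩ (P.filter (fun C => C ⊆ B₂))
      = (B₁ ∩ B₂).powersetCard 3 := by
    rw [← Finset.filter_and, ← hfilt _ ((Finset.inter_subset_left).trans hB₁X)]
    apply Finset.filter_congr
    intro C _
    simp [Finset.subset_inter_iff]
  have hbad : (P.filter (fun C => C ⊆ B₁ ∨ C ⊆ B₂)).card + (n - 4).choose 3
      = 2 * (n - 3).choose 3 := by
    have e1 : (P.filter (fun C => C ⊆ B₁ ∨ C ⊆ B₂)).card
        + ((B₁ ∩ B₂).powersetCard 3).card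
        = (B₁.powersetCard 3).card + (B₂.powersetCard 3).card := by
      rw [Finset.filter_or, ← hinter, ← hfilt _ hB₁X, ← hfilt _ hB₂X]
      exact Finset.card_union_add_card_inter _ _
    rw [Finset.card_powersetCard, Finset.card_powersetCard, Finset.card_powersetCard,
      hB₁card, hB₂card, hIcard] at e1
    omega
  set T := P \ (P.filter (fun C => C ⊆ B₁ ∨ C ⊆ B₂)) with hT
  have hTcard : T.card + (P.filter (fun C => C ⊆ B₁ ∨ C ⊆ B₂)).card = (n - 1).choose 3 := by
    rw [hT, Finset.card_sdiff_add_card_eq_card (Finset.filter_subset _ _),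
      hP, Finset.card_powersetCard, hXcard]
  set S := F.filter (fun f => f.1 = {a}) with hS
  have hmapS : ∀ f ∈ S, Iv n \ f.2 ∈ T := by
    intro f hf
    rw [hS, Finset.mem_filter] at hf
    obtain ⟨hfF, hf1⟩ := hf
    obtain ⟨hf12, hf2Iv, hf1c, hf2c⟩ := hflags f hfF
    have haf2 : a ∈ f.2 := hf12 (hf1 ▸ Finset.mem_singleton_self a)
    have hnotsub : ∀ (B : Finset ℕ), B ⊆ Iv n → B.card = n - 3 → weightB F B = n - 3 →
        a ∉ B → ¬ (Iv n \ f.2 ⊆ B) := by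
      intro B hBIv hBc hwB haB hCB
      have hBne : B ≠ f.2 := by
        intro h; exact haB (h ▸ haf2)
      have : ∃ x, x ∈ B ∧ x ∉ f.2 := by
        by_contra h
        push_neg at h
        exact hBne (Finset.eq_of_subset_of_card_le h (by omega))
      obtain ⟨x, hxB, hxf⟩ := this
      have hgF : ({x}, B) ∈ F := full_weight hflags hBc hwB hxB
      apply hindep f hfF ({x}, B) hgF
      refine ⟨?_, ?_, ?_⟩
      · apply Finset.Subset.antisymm (Finset.union_subset hf2Iv hBIv)
        intro y hy
        by_cases hyf : y ∈ f.2
        · exact Finset.mem_union_left _ hyf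
        · exact Finset.mem_union_right _ (hCB (Finset.mem_sdiff.2 ⟨hy, hyf⟩))
      · rw [hf1]
        simp [Finset.singleton_inter_of_notMem haB]
      · simp [Finset.singleton_inter_of_notMem hxf]
    have hmemP : Iv n \ f.2 ∈ P := by
      rw [hP, Finset.mem_powersetCard]
      constructor
      · rw [hX]
        apply Finset.sdiff_subset_sdiff (Finset.Subset.refl _)
        rw [← hf1]; exact hf12
      · rw [Finset.card_sdiff_of_subset hf2Iv, hIv, hf2c]; omega
    rw [hT, Finset.mem_sdiff]
    refine ⟨hmemP, fun hc => ?_⟩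
    rcases (Finset.mem_filter.1 hc).2 with h | h
    · exact hnotsub B₁ hB₁ hB₁card hw₁ haB₁ h
    · exact hnotsub B₂ hB₂ hB₂card hw₂ haB₂ h
  have hinjS : Set.InjOn (fun f : Finset ℕ × Finset ℕ => Iv n \ f.2) S := by
    intro f hf g hg h
    simp only [hS, Finset.coe_filter, Set.mem_setOf_eq] at hf hg
    have hf2 : f.2 ⊆ Iv n := (hflags f hf.1).2.1
    have hg2 : g.2 ⊆ Iv n := (hflags g hg.1).2.1
    have : f.2 = g.2 := by
      have := congrArg (fun s => Iv n \ s) h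
      simpa [Finset.sdiff_sdiff_eq_self hf2, Finset.sdiff_sdiff_eq_self hg2] using this
    exact Prod.ext (hf.2.trans hg.2.symm) this
  have hle : S.card ≤ T.card := Finset.card_le_card_of_injOn _ hmapS hinjS
  have hqle : (n - 4).choose 3 ≤ (n - 3).choose 3 :=
    Nat.choose_le_choose 3 (by omega)
  have hwa : weightA F {a} = S.card := rfl
  omega
end

section
/- Let ℱ be a left-shifted independent set of flags of type {1,n−3} of [n], and let ℱ₂ = { (A,B) ∈ ℱ : 1 ∉ B }. If |ℱ₂| > n−3, then ℱ₂ contains two flags (A₁,B₁), (A₂,B₂) with B₁ ≠ B₂, n ∉ B₁ ∪ B₂, and A₁ = A₂ = {2}. -/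
open Finset

/-- The `i,j`-shift of a flag, applied componentwise. -/
def shiftPair (i j : ℕ) (f : Finset ℕ × Finset ℕ) : Finset ℕ × Finset ℕ :=
  (shift i j f.1, shift i j f.2)

/-- The `i,j`-shift of a set of flags. -/
def shiftFamP (i j : ℕ) (F : Finset (Finset ℕ × Finset ℕ)) :
    Finset (Finset ℕ × Finset ℕ) :=
  F.image (fun f => if shiftPair i j f ∈ F then f else shiftPair i j f)

/-- `F` is left-shifted: invariant under every shift `S_{i,j}` with `i ≥ j`. -/
def LeftShiftedP (n : ℕ) (F : Finset (Finset ℕ × Finset ℕ)) : Prop :=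
  ∀ i ∈ Iv n, ∀ j ∈ Iv n, j ≤ i → shiftFamP i j F = F

/-! ### Auxiliary machinery -/

/-- The `(n-3)`-set `[n] \ {1, c, n}`. -/
def wB (n c : ℕ) : Finset ℕ := (Finset.Icc 2 (n-1)).erase c

section Aux

variable {n : ℕ} {F : Finset (Finset ℕ × Finset ℕ)}

lemma mem_shift_closed (hls : LeftShiftedP n F) {f} (hf : f ∈ F) {i j : ℕ}
    (hi : i ∈ Iv n) (hj : j ∈ Iv n) (hji : j ≤ i) : shiftPair i j f ∈ F := by
  by_cases hc : shiftPair i j f ∈ F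
  · exact hc
  · have h1 : (if shiftPair i j f ∈ F then f else shiftPair i j f) ∈ shiftFamP i j F :=
      Finset.mem_image_of_mem _ hf
    rw [if_neg hc] at h1
    rwa [hls i hi j hj hji] at h1

lemma swap_mem (hflags : ∀ f ∈ F, IsFlag n 1 (n-3) f) (hls : LeftShiftedP n F)
    {f} (hf : f ∈ F) {a : ℕ} (ha : f.1 = {a}) {i j : ℕ}
    (hi : i ∈ f.2) (hj : j ∉ f.2) (hj1 : 1 ≤ j) (hji : j ≤ i) :
    (({(if a = i then j else a)} : Finset ℕ), insert j (f.2.erase i)) ∈ F := by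
  obtain ⟨hsub, hsub2, -, -⟩ := hflags f hf
  have hiI : i ∈ Iv n := hsub2 hi
  have hjI : j ∈ Iv n := by
    simp only [Iv, Finset.mem_Icc] at hiI ⊢; omega
  have ha2 : a ∈ f.2 := hsub (by rw [ha]; exact Finset.mem_singleton_self a)
  have hja : j ≠ a := fun h => hj (h ▸ ha2)
  have hmem := mem_shift_closed hls hf hiI hjI hji
  have h2 : shift i j f.2 = insert j (f.2.erase i) := by
    unfold shift; rw [if_pos ⟨hi, hj⟩]
  have h1 : shift i j f.1 = {(if a = i then j else a)} := by
    rw [ha]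
    by_cases hai : a = i
    · subst hai
      unfold shift
      rw [if_pos ⟨Finset.mem_singleton_self a, by
        simp only [Finset.mem_singleton]; exact hja⟩]
      simp
    · unfold shift
      rw [if_neg (by simp only [Finset.mem_singleton]; tauto), if_neg hai]
  have heq : shiftPair i j f
      = (({(if a = i then j else a)} : Finset ℕ), insert j (f.2.erase i)) := by
    unfold shiftPair; rw [h1, h2]
  rwa [heq] at hmem

lemma aTwo (hn : 7 ≤ n) (hflags : ∀ f ∈ F, IsFlag n 1 (n-3) f) (hls : LeftShiftedP n F)
    {f} (hf : f ∈ F) (h1 : 1 ∉ f.2) (h2 : 2 ∈ f.2) :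
    (({2} : Finset ℕ), f.2) ∈ F := by
  obtain ⟨hsub, hsub2, hc1, -⟩ := hflags f hf
  obtain ⟨a, ha⟩ := Finset.card_eq_one.mp hc1
  by_cases hA : a = 2
  · have heq : (({2} : Finset ℕ), f.2) = (f.1, f.2) := by rw [ha, hA]
    rw [heq, Prod.mk.eta]; exact hf
  · have ha2 : a ∈ f.2 := hsub (by rw [ha]; exact Finset.mem_singleton_self a)
    have haI : a ∈ Iv n := hsub2 ha2
    have h2I : (2:ℕ) ∈ Iv n := by simp only [Iv, Finset.mem_Icc]; omega
    have hba : a ≠ 1 := fun e => h1 (e ▸ ha2)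
    have h2a : 2 ≤ a := by simp only [Iv, Finset.mem_Icc] at haI; omega
    have hmem := mem_shift_closed hls hf haI h2I h2a
    have hs2 : shift a 2 f.2 = f.2 := by
      unfold shift; rw [if_neg (by tauto)]
    have hs1 : shift a 2 f.1 = {2} := by
      rw [ha]; unfold shift
      rw [if_pos ⟨Finset.mem_singleton_self a, by
        simp only [Finset.mem_singleton]; exact fun e => hA e.symm⟩]
      simp
    have heq : shiftPair a 2 f = (({2} : Finset ℕ), f.2) := by
      unfold shiftPair; rw [hs1, hs2]
    rwa [heq] at hmem

lemma card_compl (hn : 7 ≤ n) (hflags : ∀ f ∈ F, IsFlag n 1 (n-3) f)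
    {f} (hf : f ∈ F) : (Iv n \ f.2).card = 3 := by
  obtain ⟨-, hsub2, -, hc2⟩ := hflags f hf
  rw [Finset.card_sdiff_of_subset hsub2, hc2]
  simp only [Iv, Nat.card_Icc]
  omega

/-- Case `2 ∈ B`, `n ∈ B`: two distinct witnesses. -/
lemma LC1 (hn : 7 ≤ n) (hflags : ∀ f ∈ F, IsFlag n 1 (n-3) f) (hls : LeftShiftedP n F)
    {f} (hf : f ∈ F) (h1 : 1 ∉ f.2) (h2 : 2 ∈ f.2) (hnn : n ∈ f.2) :
    ∃ c c', c ≠ c' ∧ 3 ≤ c ∧ c ≤ n-1 ∧ 3 ≤ c' ∧ c' ≤ n-1 ∧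
      (({2} : Finset ℕ), wB n c) ∈ F ∧ (({2} : Finset ℕ), wB n c') ∈ F := by
  obtain ⟨hsub, hsub2, hc1, hc2⟩ := hflags f hf
  have hC3 : (Iv n \ f.2).card = 3 := card_compl hn hflags hf
  have h1C : 1 ∈ Iv n \ f.2 :=
    Finset.mem_sdiff.mpr ⟨by simp only [Iv, Finset.mem_Icc]; omega, h1⟩
  have hcE : ((Iv n \ f.2).erase 1).card = 2 := by
    rw [Finset.card_erase_of_mem h1C, hC3]
  obtain ⟨x, y, hxy, hE⟩ := Finset.card_eq_two.mp hcE
  have hxm : x ∈ (Iv n \ f.2).erase 1 := by rw [hE]; simp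
  have hym : y ∈ (Iv n \ f.2).erase 1 := by rw [hE]; simp
  have hx1 : x ≠ 1 := (Finset.mem_erase.mp hxm).1
  have hy1 : y ≠ 1 := (Finset.mem_erase.mp hym).1
  have hxC := (Finset.mem_erase.mp hxm).2
  have hyC := (Finset.mem_erase.mp hym).2
  have hxB : x ∉ f.2 := (Finset.mem_sdiff.mp hxC).2
  have hyB : y ∉ f.2 := (Finset.mem_sdiff.mp hyC).2
  have hxI : 1 ≤ x ∧ x ≤ n := by
    have := (Finset.mem_sdiff.mp hxC).1; simpa only [Iv, Finset.mem_Icc] using this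
  have hyI : 1 ≤ y ∧ y ≤ n := by
    have := (Finset.mem_sdiff.mp hyC).1; simpa only [Iv, Finset.mem_Icc] using this
  have hx2 : x ≠ 2 := by rintro rfl; exact hxB h2
  have hy2 : y ≠ 2 := by rintro rfl; exact hyB h2
  have hxn : x ≠ n := by rintro rfl; exact hxB hnn
  have hyn : y ≠ n := by rintro rfl; exact hyB hnn
  have hCeq : Iv n \ f.2 = insert 1 ({x, y} : Finset ℕ) := by
    rw [← hE, Finset.insert_erase h1C]
  have hBiff : ∀ t, t ∈ f.2 ↔ (1 ≤ t ∧ t ≤ n ∧ t ≠ 1 ∧ t ≠ x ∧ t ≠ y) := by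
    intro t
    constructor
    · intro ht
      have htI : t ∈ Iv n := hsub2 ht
      simp only [Iv, Finset.mem_Icc] at htI
      have htC : t ∉ Iv n \ f.2 := fun hc => (Finset.mem_sdiff.mp hc).2 ht
      rw [hCeq] at htC
      simp only [Finset.mem_insert, Finset.mem_singleton] at htC
      push_neg at htC
      exact ⟨htI.1, htI.2, htC.1, htC.2.1, htC.2.2⟩
    · rintro ⟨h1t, h2t, h3t, h4t, h5t⟩
      by_contra hnot
      have ht : t ∈ Iv n \ f.2 :=
        Finset.mem_sdiff.mpr ⟨by simp only [Iv, Finset.mem_Icc]; omega, hnot⟩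
      rw [hCeq] at ht
      simp only [Finset.mem_insert, Finset.mem_singleton] at ht
      tauto
  obtain ⟨a, ha⟩ := Finset.card_eq_one.mp hc1
  have key : ∀ u : ℕ, u ∉ f.2 → 3 ≤ u → u ≤ n-1 →
      (({2} : Finset ℕ), insert u (f.2.erase n)) ∈ F := by
    intro u huB hu3 hun
    have hg := swap_mem hflags hls hf ha hnn huB (by omega) (by omega)
    have h1g : 1 ∉ insert u (f.2.erase n) := by
      simp only [Finset.mem_insert, Finset.mem_erase]
      push_neg
      exact ⟨by omega, fun _ => h1⟩
    have h2g : 2 ∈ insert u (f.2.erase n) :=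
      Finset.mem_insert_of_mem (Finset.mem_erase.mpr ⟨by omega, h2⟩)
    exact aTwo hn hflags hls hg h1g h2g
  have hw1 := key x hxB (by omega) (by omega)
  have hw2 := key y hyB (by omega) (by omega)
  have hB1 : insert x (f.2.erase n) = wB n y := by
    ext t
    simp only [Finset.mem_insert, Finset.mem_erase, wB, Finset.mem_Icc, hBiff]
    omega
  have hB2 : insert y (f.2.erase n) = wB n x := by
    ext t
    simp only [Finset.mem_insert, Finset.mem_erase, wB, Finset.mem_Icc, hBiff]
    omega
  exact ⟨x, y, hxy, by omega, by omega, by omega, by omega,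
    by rwa [hB2] at hw2, by rwa [hB1] at hw1⟩

/-- Case `2 ∈ B`, `n ∉ B`: one witness, with `B` itself of witness form. -/
lemma LC3 (hn : 7 ≤ n) (hflags : ∀ f ∈ F, IsFlag n 1 (n-3) f) (hls : LeftShiftedP n F)
    {f} (hf : f ∈ F) (h1 : 1 ∉ f.2) (h2 : 2 ∈ f.2) (hnn : n ∉ f.2) :
    ∃ c, 3 ≤ c ∧ c ≤ n-1 ∧ (({2} : Finset ℕ), wB n c) ∈ F ∧ f.2 = wB n c := by
  obtain ⟨hsub, hsub2, hc1, hc2⟩ := hflags f hf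
  have hC3 : (Iv n \ f.2).card = 3 := card_compl hn hflags hf
  have h1C : 1 ∈ Iv n \ f.2 :=
    Finset.mem_sdiff.mpr ⟨by simp only [Iv, Finset.mem_Icc]; omega, h1⟩
  have hnC : n ∈ Iv n \ f.2 :=
    Finset.mem_sdiff.mpr ⟨by simp only [Iv, Finset.mem_Icc]; omega, hnn⟩
  have hcE : ((Iv n \ f.2).erase 1).card = 2 := by
    rw [Finset.card_erase_of_mem h1C, hC3]
  have hnC' : n ∈ (Iv n \ f.2).erase 1 := Finset.mem_erase.mpr ⟨by omega, hnC⟩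
  have hcE2 : (((Iv n \ f.2).erase 1).erase n).card = 1 := by
    rw [Finset.card_erase_of_mem hnC', hcE]
  obtain ⟨x, hx⟩ := Finset.card_eq_one.mp hcE2
  have hxm : x ∈ ((Iv n \ f.2).erase 1).erase n := by
    rw [hx]; exact Finset.mem_singleton_self x
  have hxn : x ≠ n := (Finset.mem_erase.mp hxm).1
  have hx1 : x ≠ 1 := (Finset.mem_erase.mp (Finset.mem_erase.mp hxm).2).1
  have hxC := (Finset.mem_erase.mp (Finset.mem_erase.mp hxm).2).2
  have hxB : x ∉ f.2 := (Finset.mem_sdiff.mp hxC).2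
  have hxI : 1 ≤ x ∧ x ≤ n := by
    have := (Finset.mem_sdiff.mp hxC).1; simpa only [Iv, Finset.mem_Icc] using this
  have hx2 : x ≠ 2 := by rintro rfl; exact hxB h2
  have hCeq : Iv n \ f.2 = insert 1 (insert n ({x} : Finset ℕ)) := by
    rw [← hx, Finset.insert_erase hnC', Finset.insert_erase h1C]
  have hBiff : ∀ t, t ∈ f.2 ↔ (1 ≤ t ∧ t ≤ n ∧ t ≠ 1 ∧ t ≠ n ∧ t ≠ x) := by
    intro t
    constructor
    · intro ht
      have htI : t ∈ Iv n := hsub2 ht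
      simp only [Iv, Finset.mem_Icc] at htI
      have htC : t ∉ Iv n \ f.2 := fun hc => (Finset.mem_sdiff.mp hc).2 ht
      rw [hCeq] at htC
      simp only [Finset.mem_insert, Finset.mem_singleton] at htC
      push_neg at htC
      exact ⟨htI.1, htI.2, htC.1, htC.2.1, htC.2.2⟩
    · rintro ⟨h1t, h2t, h3t, h4t, h5t⟩
      by_contra hnot
      have ht : t ∈ Iv n \ f.2 :=
        Finset.mem_sdiff.mpr ⟨by simp only [Iv, Finset.mem_Icc]; omega, hnot⟩
      rw [hCeq] at ht
      simp only [Finset.mem_insert, Finset.mem_singleton] at ht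
      tauto
  have hw := aTwo hn hflags hls hf h1 h2
  have hBeq : f.2 = wB n x := by
    ext t
    simp only [wB, Finset.mem_erase, Finset.mem_Icc, hBiff]
    omega
  exact ⟨x, by omega, by omega, by rwa [hBeq] at hw, hBeq⟩

/-- Case `2 ∉ B`, `n ∉ B`: witnesses `3` and `4`. -/
lemma LC2a (hn : 7 ≤ n) (hflags : ∀ f ∈ F, IsFlag n 1 (n-3) f) (hls : LeftShiftedP n F)
    {f} (hf : f ∈ F) (h1 : 1 ∉ f.2) (h2 : 2 ∉ f.2) (hnn : n ∉ f.2) :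
    (({2} : Finset ℕ), wB n 3) ∈ F ∧ (({2} : Finset ℕ), wB n 4) ∈ F := by
  obtain ⟨hsub, hsub2, hc1, hc2⟩ := hflags f hf
  have hC3 : (Iv n \ f.2).card = 3 := card_compl hn hflags hf
  have hsubC : ({1, 2, n} : Finset ℕ) ⊆ Iv n \ f.2 := by
    intro t ht
    simp only [Finset.mem_insert, Finset.mem_singleton] at ht
    rcases ht with rfl | rfl | rfl
    · exact Finset.mem_sdiff.mpr ⟨by simp only [Iv, Finset.mem_Icc]; omega, h1⟩
    · exact Finset.mem_sdiff.mpr ⟨by simp only [Iv, Finset.mem_Icc]; omega, h2⟩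
    · exact Finset.mem_sdiff.mpr ⟨by simp only [Iv, Finset.mem_Icc]; omega, hnn⟩
  have hcard123 : ({1, 2, n} : Finset ℕ).card = 3 :=
    Finset.card_eq_three.mpr ⟨1, 2, n, by omega, by omega, by omega, rfl⟩
  have hCeq : ({1, 2, n} : Finset ℕ) = Iv n \ f.2 :=
    Finset.eq_of_subset_of_card_le hsubC (le_of_eq (by rw [hC3, hcard123]))
  have hBiff : ∀ t, t ∈ f.2 ↔ (3 ≤ t ∧ t ≤ n - 1) := by
    intro t
    constructor
    · intro ht
      have htI : t ∈ Iv n := hsub2 ht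
      simp only [Iv, Finset.mem_Icc] at htI
      have htC : t ∉ Iv n \ f.2 := fun hc => (Finset.mem_sdiff.mp hc).2 ht
      rw [← hCeq] at htC
      simp only [Finset.mem_insert, Finset.mem_singleton] at htC
      push_neg at htC
      omega
    · intro ht
      by_contra hnot
      have htm : t ∈ Iv n \ f.2 :=
        Finset.mem_sdiff.mpr ⟨by simp only [Iv, Finset.mem_Icc]; omega, hnot⟩
      rw [← hCeq] at htm
      simp only [Finset.mem_insert, Finset.mem_singleton] at htm
      omega
  obtain ⟨a, ha⟩ := Finset.card_eq_one.mp hc1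
  have key : ∀ i : ℕ, i ∈ f.2 → (({2} : Finset ℕ), wB n i) ∈ F := by
    intro i hiB
    have hi3 : 3 ≤ i ∧ i ≤ n - 1 := (hBiff i).mp hiB
    have hg := swap_mem hflags hls hf ha hiB h2 (by omega) (by omega)
    have h1g : 1 ∉ insert 2 (f.2.erase i) := by
      simp only [Finset.mem_insert, Finset.mem_erase]
      push_neg
      exact ⟨by omega, fun _ => h1⟩
    have h2g : 2 ∈ insert 2 (f.2.erase i) := Finset.mem_insert_self _ _
    have hw := aTwo hn hflags hls hg h1g h2g
    have hBeq : insert 2 (f.2.erase i) = wB n i := by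
      ext t
      simp only [Finset.mem_insert, Finset.mem_erase, wB, Finset.mem_Icc, hBiff]
      omega
    rwa [hBeq] at hw
  exact ⟨key 3 ((hBiff 3).mpr (by omega)), key 4 ((hBiff 4).mpr (by omega))⟩

end Aux

/-- in a left-shifted independent set `ℱ` of flags of type `{1,n−3}`
(`n ≥ 7`), if the set `ℱ₂` of flags `(A,B) ∈ ℱ` with `1 ∉ B` has more than `n−3`
elements, then `ℱ₂` contains two flags `(A₁,B₁)`, `(A₂,B₂)` with `B₁ ≠ B₂`,
`n ∉ B₁ ∪ B₂` and `A₁ = A₂ = {2}`. -/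
theorem stmt_13 (n : ℕ) (hn : 7 ≤ n)
    (F : Finset (Finset ℕ × Finset ℕ)) (hflags : ∀ f ∈ F, IsFlag n 1 (n - 3) f)
    (hindep : Indep n F) (hls : LeftShiftedP n F)
    (F₂ : Finset (Finset ℕ × Finset ℕ)) (hF₂ : F₂ = F.filter (fun f => 1 ∉ f.2))
    (hcard : n - 3 < F₂.card) :
    ∃ f₁ ∈ F₂, ∃ f₂ ∈ F₂, f₁.2 ≠ f₂.2 ∧ n ∉ f₁.2 ∪ f₂.2 ∧
      f₁.1 = {2} ∧ f₂.1 = {2} := by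
  by_contra hno
  have hmemF₂ : ∀ c : ℕ, (({2} : Finset ℕ), wB n c) ∈ F →
      (({2} : Finset ℕ), wB n c) ∈ F₂ := by
    intro c hc
    rw [hF₂, Finset.mem_filter]
    refine ⟨hc, ?_⟩
    simp only [wB, Finset.mem_erase, Finset.mem_Icc]
    omega
  have hTwo : ∀ c c' : ℕ, 3 ≤ c → c ≤ n-1 → 3 ≤ c' → c' ≤ n-1 → c ≠ c' →
      (({2} : Finset ℕ), wB n c) ∈ F → (({2} : Finset ℕ), wB n c') ∈ F →
      (∃ f₁ ∈ F₂, ∃ f₂ ∈ F₂, f₁.2 ≠ f₂.2 ∧ n ∉ f₁.2 ∪ f₂.2 ∧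
        f₁.1 = {2} ∧ f₂.1 = {2}) := by
    intro c c' h3c hcn h3c' hc'n hne hc hc'
    refine ⟨_, hmemF₂ c hc, _, hmemF₂ c' hc', ?_, ?_, rfl, rfl⟩
    · intro h
      have hmm : c' ∈ wB n c := by
        simp only [wB, Finset.mem_erase, Finset.mem_Icc]; omega
      rw [show wB n c = (({2} : Finset ℕ), wB n c).2 from rfl, h] at hmm
      simp only [wB, Finset.mem_erase, Finset.mem_Icc] at hmm
      omega
    · simp only [Finset.mem_union, wB, Finset.mem_erase, Finset.mem_Icc]
      omega
  have huniq : ∀ c c' : ℕ, 3 ≤ c → c ≤ n-1 → 3 ≤ c' → c' ≤ n-1 →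
      (({2} : Finset ℕ), wB n c) ∈ F → (({2} : Finset ℕ), wB n c') ∈ F → c = c' := by
    intro c c' u1 u2 u3 u4 hc hc'
    by_contra hne
    exact hno (hTwo c c' u1 u2 u3 u4 hne hc hc')
  have hstruct : ∀ f ∈ F₂, ∃ c, 3 ≤ c ∧ c ≤ n-1 ∧
      (({2} : Finset ℕ), wB n c) ∈ F ∧ f.2 = wB n c := by
    intro f hf2
    rw [hF₂, Finset.mem_filter] at hf2
    obtain ⟨hfF, h1⟩ := hf2
    by_cases h2 : 2 ∈ f.2
    · by_cases hnn : n ∈ f.2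
      · obtain ⟨c, c', hne, u1, u2, u3, u4, hc, hc'⟩ := LC1 hn hflags hls hfF h1 h2 hnn
        exact absurd (huniq c c' u1 u2 u3 u4 hc hc') hne
      · exact LC3 hn hflags hls hfF h1 h2 hnn
    · by_cases hnn : n ∈ f.2
      · -- move one element of B to 2, then apply LC1
        obtain ⟨hsub, hsub2, hc1, hc2⟩ := hflags f hfF
        have hpos : 0 < (f.2.erase n).card := by
          rw [Finset.card_erase_of_mem hnn, hc2]; omega
        obtain ⟨i, hi⟩ := Finset.card_pos.mp hpos
        have hin : i ≠ n := (Finset.mem_erase.mp hi).1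
        have hiB : i ∈ f.2 := (Finset.mem_erase.mp hi).2
        have hiI : i ∈ Iv n := hsub2 hiB
        have hi1 : i ≠ 1 := fun e => h1 (e ▸ hiB)
        have h2i : 2 ≤ i := by simp only [Iv, Finset.mem_Icc] at hiI; omega
        obtain ⟨a, ha⟩ := Finset.card_eq_one.mp hc1
        have hg := swap_mem hflags hls hfF ha hiB h2 (by omega) h2i
        have h1g : 1 ∉ insert 2 (f.2.erase i) := by
          simp only [Finset.mem_insert, Finset.mem_erase]
          push_neg
          exact ⟨by omega, fun _ => h1⟩
        have h2g : 2 ∈ insert 2 (f.2.erase i) := Finset.mem_insert_self _ _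
        have hng : n ∈ insert 2 (f.2.erase i) :=
          Finset.mem_insert_of_mem (Finset.mem_erase.mpr ⟨hin.symm, hnn⟩)
        obtain ⟨c, c', hne, u1, u2, u3, u4, hc, hc'⟩ := LC1 hn hflags hls hg h1g h2g hng
        exact absurd (huniq c c' u1 u2 u3 u4 hc hc') hne
      · obtain ⟨hP3, hP4⟩ := LC2a hn hflags hls hfF h1 h2 hnn
        have := huniq 3 4 (by omega) (by omega) (by omega) (by omega) hP3 hP4
        omega
  have hpos : 0 < F₂.card := by omega
  obtain ⟨f₀, hf₀⟩ := Finset.card_pos.mp hpos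
  obtain ⟨c₀, hc₀1, hc₀2, hPc₀, hB₀⟩ := hstruct f₀ hf₀
  have hall : ∀ f ∈ F₂, f.2 = wB n c₀ := by
    intro f hf
    obtain ⟨c, u1, u2, hP, hB⟩ := hstruct f hf
    rw [hB, huniq c c₀ u1 u2 hc₀1 hc₀2 hP hPc₀]
  have hsubset : F₂ ⊆ (wB n c₀).image (fun a => (({a} : Finset ℕ), wB n c₀)) := by
    intro f hf
    have hfF : f ∈ F := by rw [hF₂] at hf; exact (Finset.mem_filter.mp hf).1
    obtain ⟨a, ha⟩ := Finset.card_eq_one.mp (hflags f hfF).2.2.1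
    refine Finset.mem_image.mpr ⟨a, ?_, ?_⟩
    · have haB : a ∈ f.2 := (hflags f hfF).1 (by rw [ha]; exact Finset.mem_singleton_self a)
      rwa [hall f hf] at haB
    · rw [← ha, ← hall f hf]
  have hwcard : (wB n c₀).card = n - 3 := by
    rw [wB, Finset.card_erase_of_mem (Finset.mem_Icc.mpr ⟨by omega, by omega⟩),
      Nat.card_Icc]
    omega
  have hle : F₂.card ≤ n - 3 :=
    le_trans (Finset.card_le_card hsubset)
      (le_trans Finset.card_image_le (le_of_eq hwcard))
  omega
end

section
/- Let n ≥ 11 and let ℱ be a left-shifted independent set of flags of type {1,n−3} of [n]. Then ℱ contains no two flags (A,B) and (A',B') with B ∪ B' = [n] \ {1}. -/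
open Finset

/-- A left-shifted family is closed under every shift `S_{i,1}`. -/
lemma shift_mem_of_leftShifted {n : ℕ} {F : Finset (Finset ℕ × Finset ℕ)}
    (hls : LeftShiftedP n F) {i : ℕ} (hi : i ∈ Iv n)
    {f : Finset ℕ × Finset ℕ} (hf : f ∈ F) : shiftPair i 1 f ∈ F := by
  by_cases hc : shiftPair i 1 f ∈ F
  · exact hc
  · exfalso
    have hi1 : (1 : ℕ) ≤ i := (Finset.mem_Icc.mp hi).1
    have h1n : (1 : ℕ) ∈ Iv n := by
      simp only [Iv, Finset.mem_Icc]
      exact ⟨le_refl 1, le_trans hi1 (Finset.mem_Icc.mp hi).2⟩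
    have h := hls i hi 1 h1n hi1
    have hmem : (if shiftPair i 1 f ∈ F then f else shiftPair i 1 f) ∈ shiftFamP i 1 F :=
      Finset.mem_image_of_mem _ hf
    rw [if_neg hc, h] at hmem
    exact hc hmem

/-- Union covering lemma for a single shift. -/
lemma union_shift_one {n w : ℕ} {B B' : Finset ℕ}
    (hw : w ∈ B) (hBB' : B ∪ B' = (Iv n).erase 1) (hn : 1 ≤ n) :
    B ∪ insert 1 (B'.erase w) = Iv n := by
  ext z
  have h := Finset.ext_iff.mp hBB' z
  have hwB := Finset.ext_iff.mp hBB' w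
  simp only [Iv, Finset.mem_union, Finset.mem_insert, Finset.mem_erase,
    Finset.mem_Icc] at h hwB ⊢
  by_cases hz1 : z = 1
  · subst hz1; simp; omega
  · by_cases hzw : z = w
    · subst hzw
      exact ⟨fun _ => (hwB.mp (Or.inl hw)).2, fun _ => Or.inl hw⟩
    · constructor
      · rintro (hB | h1 | ⟨_, hB'⟩)
        · exact (h.mp (Or.inl hB)).2
        · exact absurd h1 hz1
        · exact (h.mp (Or.inr hB')).2
      · intro hb
        rcases h.mpr ⟨hz1, hb⟩ with hB | hB'
        · exact Or.inl hB
        · exact Or.inr (Or.inr ⟨hzw, hB'⟩)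

/-- Union covering lemma for a double shift. -/
lemma union_shift_two {n a a' : ℕ} {B B' : Finset ℕ}
    (haB : a ∈ B) (haB' : a ∈ B') (ha'B : a' ∈ B) (ha'B' : a' ∈ B') (hne : a ≠ a')
    (hBB' : B ∪ B' = (Iv n).erase 1) (hn : 1 ≤ n) :
    insert 1 (B.erase a') ∪ insert 1 (B'.erase a) = Iv n := by
  ext z
  have h := Finset.ext_iff.mp hBB' z
  simp only [Iv, Finset.mem_union, Finset.mem_insert, Finset.mem_erase,
    Finset.mem_Icc] at h ⊢
  by_cases hz1 : z = 1
  · subst hz1; simp; omega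
  constructor
  · rintro ((h1 | ⟨_, hB⟩) | h1 | ⟨_, hB'⟩)
    · exact absurd h1 hz1
    · exact (h.mp (Or.inl hB)).2
    · exact absurd h1 hz1
    · exact (h.mp (Or.inr hB')).2
  · intro hb
    by_cases hza : z = a
    · subst hza; exact Or.inl (Or.inr ⟨hne, haB⟩)
    by_cases hza' : z = a'
    · subst hza'; exact Or.inr (Or.inr ⟨fun hh => hne hh.symm, ha'B'⟩)
    rcases h.mpr ⟨hz1, hb⟩ with hB | hB'
    · exact Or.inl (Or.inr ⟨hza', hB⟩)
    · exact Or.inr (Or.inr ⟨hza, hB'⟩)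

/-- for `n ≥ 11`, a left-shifted independent set of flags of type
`{1,n−3}` contains no two flags `(A,B)`, `(A',B')` with `B ∪ B' = [n] \ {1}`. -/
theorem stmt_14 (n : ℕ) (hn : 11 ≤ n)
    (F : Finset (Finset ℕ × Finset ℕ)) (hflags : ∀ f ∈ F, IsFlag n 1 (n - 3) f)
    (hindep : Indep n F) (hls : LeftShiftedP n F) :
    ∀ f ∈ F, ∀ g ∈ F, f.2 ∪ g.2 ≠ (Iv n).erase 1 := by
  intro f hf g hg hBB'
  obtain ⟨hAB, hBIv, hA1, hBc⟩ := hflags f hf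
  obtain ⟨hAB', hBIv', hA1', hBc'⟩ := hflags g hg
  obtain ⟨a, hAa⟩ := Finset.card_eq_one.mp hA1
  obtain ⟨a', hAa'⟩ := Finset.card_eq_one.mp hA1'
  have hn1 : 1 ≤ n := by omega
  have haB : a ∈ f.2 := hAB (hAa ▸ Finset.mem_singleton_self a)
  have ha'B' : a' ∈ g.2 := hAB' (hAa' ▸ Finset.mem_singleton_self a')
  have h1B : (1 : ℕ) ∉ f.2 := by
    intro h
    have := hBB' ▸ Finset.mem_union_left g.2 h
    simp at this
  have h1B' : (1 : ℕ) ∉ g.2 := by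
    intro h
    have := hBB' ▸ Finset.mem_union_right f.2 h
    simp at this
  have ha1 : a ≠ 1 := fun h => h1B (h ▸ haB)
  have ha'1 : a' ≠ 1 := fun h => h1B' (h ▸ ha'B')
  have haIv : a ∈ Iv n := hBIv haB
  have ha'Iv : a' ∈ Iv n := hBIv' ha'B'
  by_cases hcA' : a' ∈ f.2
  · by_cases hcA : a ∈ g.2
    · by_cases haa : a = a'
      · -- both apexes equal and in both sets: shift g by S_{a,1}
        subst haa
        have hg2 : shiftPair a 1 g ∈ F := shift_mem_of_leftShifted hls haIv hg
        have hgt : shiftPair a 1 g = ({1}, insert 1 (g.2.erase a)) := by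
          simp only [shiftPair, shift, hAa']
          rw [if_pos ⟨Finset.mem_singleton_self a, by simp [ha1.symm]⟩,
            if_pos ⟨hcA, h1B'⟩]
          simp
        rw [hgt] at hg2
        exact hindep f hf _ hg2 ⟨union_shift_one haB hBB' hn1,
          by rw [hAa]; exact Finset.singleton_inter_of_notMem (by simp [ha1]),
          Finset.singleton_inter_of_notMem h1B⟩
      · -- distinct apexes, each in both sets: shift both
        have hf2 : shiftPair a' 1 f ∈ F := shift_mem_of_leftShifted hls ha'Iv hf
        have hg2 : shiftPair a 1 g ∈ F := shift_mem_of_leftShifted hls haIv hg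
        have hft : shiftPair a' 1 f = ({a}, insert 1 (f.2.erase a')) := by
          simp only [shiftPair, shift, hAa]
          rw [if_neg (by rintro ⟨h, -⟩; exact haa (Finset.mem_singleton.mp h).symm),
            if_pos ⟨hcA', h1B⟩]
        have hgt : shiftPair a 1 g = ({a'}, insert 1 (g.2.erase a)) := by
          simp only [shiftPair, shift, hAa']
          rw [if_neg (by simp [haa]), if_pos ⟨hcA, h1B'⟩]
        rw [hft] at hf2
        rw [hgt] at hg2
        exact hindep _ hf2 _ hg2
          ⟨union_shift_two haB hcA hcA' ha'B' haa hBB' hn1,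
          Finset.singleton_inter_of_notMem (by simp [ha1]),
          Finset.singleton_inter_of_notMem (by simp [ha'1])⟩
    · -- a' ∈ f.2, a ∉ g.2: shift f by S_{a',1}
      have hne : a ≠ a' := fun h => hcA (h ▸ ha'B')
      have hf2 : shiftPair a' 1 f ∈ F := shift_mem_of_leftShifted hls ha'Iv hf
      have hft : shiftPair a' 1 f = ({a}, insert 1 (f.2.erase a')) := by
        simp only [shiftPair, shift, hAa]
        rw [if_neg (by rintro ⟨h, -⟩; exact hne (Finset.mem_singleton.mp h).symm),
          if_pos ⟨hcA', h1B⟩]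
      rw [hft] at hf2
      have hU : insert 1 (f.2.erase a') ∪ g.2 = Iv n := by
        rw [Finset.union_comm]
        exact union_shift_one ha'B' (Finset.union_comm f.2 g.2 ▸ hBB') hn1
      exact hindep _ hf2 g hg ⟨hU,
        Finset.singleton_inter_of_notMem hcA,
        by rw [hAa']; exact Finset.singleton_inter_of_notMem (by simp [ha'1])⟩
  · by_cases hcA : a ∈ g.2
    · -- a' ∉ f.2, a ∈ g.2: shift g by S_{a,1}
      have hne : a ≠ a' := fun h => hcA' (h ▸ haB)
      have hg2 : shiftPair a 1 g ∈ F := shift_mem_of_leftShifted hls haIv hg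
      have hgt : shiftPair a 1 g = ({a'}, insert 1 (g.2.erase a)) := by
        simp only [shiftPair, shift, hAa']
        rw [if_neg (by simp [hne]), if_pos ⟨hcA, h1B'⟩]
      rw [hgt] at hg2
      exact hindep f hf _ hg2 ⟨union_shift_one haB hBB' hn1,
        by rw [hAa]; exact Finset.singleton_inter_of_notMem (by simp [ha1]),
        Finset.singleton_inter_of_notMem hcA'⟩
    · -- a' ∉ f.2, a ∉ g.2: shift g by S_{w,1} for some w ∈ f.2 ∩ g.2
      have hcard : ((Iv n).erase 1).card = n - 1 := by
        rw [Finset.card_erase_of_mem (by simp [Iv]; omega)]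
        simp [Iv, Nat.card_Icc]
      have hkey := Finset.card_union_add_card_inter f.2 g.2
      rw [hBB', hcard, hBc, hBc'] at hkey
      have hpos : 0 < (f.2 ∩ g.2).card := by omega
      obtain ⟨w, hw⟩ := Finset.card_pos.mp hpos
      have hwB : w ∈ f.2 := (Finset.mem_inter.mp hw).1
      have hwB' : w ∈ g.2 := (Finset.mem_inter.mp hw).2
      have hwa' : w ≠ a' := fun h => hcA' (h ▸ hwB)
      have hg2 : shiftPair w 1 g ∈ F := shift_mem_of_leftShifted hls (hBIv hwB) hg
      have hgt : shiftPair w 1 g = ({a'}, insert 1 (g.2.erase w)) := by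
        simp only [shiftPair, shift, hAa']
        rw [if_neg (by simp [hwa']), if_pos ⟨hwB', h1B'⟩]
      rw [hgt] at hg2
      exact hindep f hf _ hg2 ⟨union_shift_one hwB hBB' hn1,
        by rw [hAa]; exact Finset.singleton_inter_of_notMem (by simp [ha1, hcA]),
        Finset.singleton_inter_of_notMem hcA'⟩
end

section
/- Let n ≥ 11 and let ℱ be a maximum left-shifted independent set of flags of type {1,n−3} of [n]. Then the singleton {1} has ℱ-weight C(n−1,3); equivalently, every flag (A,B) ∈ ℱ satisfies 1 ∈ B. -/
open Finset

/-!
Write a flag of type `{1, n-3}` as `({a}, [n] \ C)` with `C` a `3`-set; two such flags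
`({a}, [n] \ C₁)`, `({b}, [n] \ C₂)` are opposite iff `C₁ ∩ C₂ = ∅`, `a ∈ C₂` and `b ∈ C₁`.
Call the flag bad if `1 ∈ C`. Shifting two bad flags of a left-shifted independent family
towards each other shows that their pairs `C \ {1}` always meet. Hence for a `3`-set
`S ⊆ [n] \ {1}` the pairs avoiding `S` form an intersecting family on `n - 4` points, of size
at most `n - 5` by Erdős–Ko–Rado, so a star `({1}, [n] \ S)` is opposite to at most `3 (n - 5)`
bad flags, while a bad flag `({a}, B)` is opposite to the `C(n-4, 2)` stars with `a ∈ S ⊆ B`.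
Stars opposite to a member of `ℱ` are missing from `ℱ`, and trading the bad flags for the missing
stars keeps the family independent; so by maximality
`#bad · C(n-4, 2) ≤ #missing · 3 (n - 5) ≤ #bad · 3 (n - 5)`, which forces `#bad = 0` once
`n ≥ 11`. Maximality then also puts every star in `ℱ`.
-/

theorem Finset.card_le_choose_of_intersecting {α : Type*} [DecidableEq α] {V : Finset α}
    {𝒜 : Finset (Finset α)} {r : ℕ} (h𝒜 : (𝒜 : Set (Finset α)).Intersecting)
    (hr𝒜 : (𝒜 : Set (Finset α)).Sized r) (hV : ∀ A ∈ 𝒜, A ⊆ V) (hr : r ≤ #V / 2) :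
    #𝒜 ≤ (#V - 1).choose (r - 1) := by
  let ι : Fin #V ↪ α := V.equivFin.symm.toEmbedding.trans (Function.Embedding.subtype _)
  have hι : ∀ x ∈ V, ∃ i, ι i = x := fun x hx => ⟨V.equivFin ⟨x, hx⟩, by simp [ι]⟩
  let ℬ : Finset (Finset (Fin #V)) := {B | B.map ι ∈ 𝒜}
  have h𝒜ℬ : 𝒜 ⊆ ℬ.map ⟨(·.map ι), map_injective ι⟩ := by
    intro A hA
    have hmap : ({i | ι i ∈ A} : Finset (Fin #V)).map ι = A := by
      ext x
      simp only [mem_map, mem_filter, mem_univ, true_and]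
      constructor
      · rintro ⟨i, hi, rfl⟩
        exact hi
      · intro hx
        obtain ⟨i, rfl⟩ := hι x (hV A hA hx)
        exact ⟨i, hx, rfl⟩
    exact mem_map.2 ⟨_, by simpa [ℬ, hmap] using hA, hmap⟩
  calc #𝒜 ≤ #ℬ := (card_le_card h𝒜ℬ).trans_eq (card_map _)
    _ ≤ _ := by
      refine erdos_ko_rado (fun B hB C hC hBC => ?_) (fun B hB => ?_) hr
      · exact h𝒜 (mem_filter.1 hB).2 (mem_filter.1 hC).2 ((disjoint_map ι).2 hBC)
      · simpa using hr𝒜 (mem_filter.1 hB).2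

theorem Finset.choose_le_card_filter_mem_subset {α : Type*} [DecidableEq α] {U B : Finset α}
    {a : α} (haB : a ∈ B) (hBU : B ⊆ U) (k : ℕ) :
    (#B - 1).choose k ≤ #{S ∈ powersetCard (k + 1) U | a ∈ S ∧ S ⊆ B} := by
  rw [← card_erase_of_mem haB, ← card_powersetCard]
  refine card_le_card_of_injOn (insert a) (fun T hT => ?_) (fun T hT T' hT' h => ?_)
  · obtain ⟨hTB, hTk⟩ := mem_powersetCard.1 hT
    have haT : a ∉ T := fun h => (mem_erase.1 (hTB h)).1 rfl
    have hsub : insert a T ⊆ B := insert_subset haB (hTB.trans (erase_subset a B))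
    simp [hsub.trans hBU, card_insert_of_notMem haT, hTk, hsub]
  · have haT : ∀ T ∈ (powersetCard k (B.erase a) : Set (Finset α)), a ∉ T :=
      fun T hT h => (mem_erase.1 ((mem_powersetCard.1 hT).1 h)).1 rfl
    rw [← erase_insert (haT T hT), ← erase_insert (haT T' hT'), h]

lemma three_mul_lt_choose_two {n : ℕ} (hn : 11 ≤ n) : 3 * (n - 5) < (n - 4).choose 2 := by
  obtain ⟨m, rfl⟩ := Nat.exists_eq_add_of_le' hn
  rw [show m + 11 - 4 = m + 7 by omega, show m + 11 - 5 = m + 6 by omega, Nat.choose_two_right,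
    Nat.lt_iff_add_one_le, Nat.le_div_iff_mul_le (by decide), show m + 7 - 1 = m + 6 by omega]
  nlinarith

lemma mem_Iv {n x : ℕ} : x ∈ Iv n ↔ 1 ≤ x ∧ x ≤ n := mem_Icc

lemma card_Iv (n : ℕ) : #(Iv n) = n := by simp [Iv]

lemma one_mem_Iv {n : ℕ} (hn : 1 ≤ n) : 1 ∈ Iv n := mem_Iv.2 ⟨le_rfl, hn⟩

section Shift

variable {i j a : ℕ} {A : Finset ℕ}

lemma shift_of_notMem (h : i ∉ A) : shift i j A = A := by simp [shift, h]

lemma shift_singleton_self (a j : ℕ) : shift a j {a} = {j} := by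
  by_cases h : j = a <;> simp [shift, h]

lemma shift_sdiff {n : ℕ} {C : Finset ℕ} (hi : i ∈ Iv n) (hiC : i ∉ C) (hj : j ∈ Iv n)
    (hjC : j ∈ C) : shift i j (Iv n \ C) = Iv n \ insert i (C.erase j) := by
  rw [shift, if_pos (by simp [hi, hiC, hjC])]
  ext x
  by_cases hxi : x = i <;> by_cases hxj : x = j <;> simp_all

lemma LeftShiftedP.shiftPair_mem {n : ℕ} {F : Finset (Finset ℕ × Finset ℕ)}
    (hls : LeftShiftedP n F) (hi : i ∈ Iv n) (hj : j ∈ Iv n) (hji : j ≤ i)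
    {f : Finset ℕ × Finset ℕ} (hf : f ∈ F) : shiftPair i j f ∈ F := by
  by_contra h
  have hmem := mem_image_of_mem (fun f => if shiftPair i j f ∈ F then f else shiftPair i j f) hf
  rw [← shiftFamP, hls i hi j hj hji, if_neg h] at hmem
  exact h hmem

end Shift

def flagOf (n a : ℕ) (C : Finset ℕ) : Finset ℕ × Finset ℕ := ({a}, Iv n \ C)

lemma flagOf_injOn (n a : ℕ) : Set.InjOn (flagOf n a) {C | C ⊆ Iv n} := by
  intro C hC C' hC' h
  rw [← Finset.sdiff_sdiff_eq_self (t := C) hC, ← Finset.sdiff_sdiff_eq_self (t := C') hC']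
  exact congrArg (Iv n \ ·) (congrArg Prod.snd h)

lemma oppFlag_flagOf {n a b : ℕ} {C₁ C₂ : Finset ℕ} (hd : Disjoint C₁ C₂) (ha : a ∈ C₂)
    (hb : b ∈ C₁) : OppFlag n (flagOf n a C₁) (flagOf n b C₂) := by
  refine ⟨?_, by simp [flagOf, ha], by simp [flagOf, hb]⟩
  rw [flagOf, flagOf, ← sdiff_inter_distrib_right, disjoint_iff_inter_eq_empty.1 hd, sdiff_empty]

/-- `F` contains the flag `({a}, [n] \ C)`, where `C` is a `3`-subset of `[n]` avoiding `a`. -/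
structure HasFlag (n : ℕ) (F : Finset (Finset ℕ × Finset ℕ)) (a : ℕ) (C : Finset ℕ) : Prop where
  point_mem : a ∈ Iv n
  notMem : a ∉ C
  subset : C ⊆ Iv n
  card_eq : #C = 3
  flagOf_mem : flagOf n a C ∈ F

namespace HasFlag

variable {n : ℕ} {F : Finset (Finset ℕ × Finset ℕ)} {a b j : ℕ} {C C₁ C₂ : Finset ℕ}

lemma raise (hls : LeftShiftedP n F) (h : HasFlag n F a C) {i : ℕ} (hj : j ∈ C)
    (hi : i ∈ Iv n) (hji : j ≤ i) (hiC : i ∉ C) (hia : i ≠ a) :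
    HasFlag n F a (insert i (C.erase j)) where
  point_mem := h.point_mem
  notMem := by simp [hia.symm, h.notMem]
  subset := insert_subset hi ((erase_subset _ _).trans h.subset)
  card_eq := by rw [card_insert_of_notMem (fun h' => hiC (mem_of_mem_erase h')),
    card_erase_of_mem hj, h.card_eq]
  flagOf_mem := by
    have := hls.shiftPair_mem hi (h.subset hj) hji h.flagOf_mem
    rwa [shiftPair, flagOf, shift_of_notMem (by simpa using hia),
      shift_sdiff hi hiC (h.subset hj) hj] at this

lemma lower (hls : LeftShiftedP n F) (h : HasFlag n F a C) (hj : j ∈ Iv n) (hja : j ≤ a)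
    (hjC : j ∉ C) : HasFlag n F j C where
  point_mem := hj
  notMem := hjC
  subset := h.subset
  card_eq := h.card_eq
  flagOf_mem := by
    have := hls.shiftPair_mem h.point_mem hj hja h.flagOf_mem
    rwa [shiftPair, flagOf, shift_singleton_self, shift, if_neg (by simp [hj, hjC])] at this

lemma swap (hls : LeftShiftedP n F) (h : HasFlag n F a C) (hj : j ∈ C) (hja : j ≤ a) :
    HasFlag n F j (insert a (C.erase j)) where
  point_mem := h.subset hj
  notMem := by simp [show j ≠ a from fun h' => h.notMem (h' ▸ hj)]
  subset := insert_subset h.point_mem ((erase_subset _ _).trans h.subset)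
  card_eq := by rw [card_insert_of_notMem (fun h' => h.notMem (mem_of_mem_erase h')),
    card_erase_of_mem hj, h.card_eq]
  flagOf_mem := by
    have := hls.shiftPair_mem h.point_mem (h.subset hj) hja h.flagOf_mem
    rwa [shiftPair, flagOf, shift_singleton_self,
      shift_sdiff h.point_mem h.notMem (h.subset hj) hj] at this

lemma not_opposite (hindep : Indep n F) (h₁ : HasFlag n F a C₁) (h₂ : HasFlag n F b C₂)
    (hd : Disjoint C₁ C₂) (ha : a ∈ C₂) (hb : b ∈ C₁) : False :=
  hindep _ h₁.flagOf_mem _ h₂.flagOf_mem (oppFlag_flagOf hd ha hb)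

/-- Swapping `b` with `1 ∈ C₂` gives the flag `({1}, [n] \ insert b (C₂ \ {1}))`, which is
opposite to `({a}, [n] \ C₁)`. -/
lemma not_opposite_swap_one (hindep : Indep n F) (hls : LeftShiftedP n F)
    (h₁ : HasFlag n F a C₁) (h₂ : HasFlag n F b C₂) (h1₁ : 1 ∈ C₁) (h1₂ : 1 ∈ C₂)
    (hd : Disjoint (C₁.erase 1) (C₂.erase 1)) (hb : b ∉ C₁) (ha : a = b ∨ a ∈ C₂) : False := by
  refine h₁.not_opposite hindep (h₂.swap hls h1₂ (mem_Iv.1 h₂.point_mem).1) ?_ ?_ h1₁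
  · rw [disjoint_insert_right]
    refine ⟨hb, disjoint_left.2 fun t ht ht' => disjoint_left.1 hd ?_ ht'⟩
    exact mem_erase.2 ⟨(mem_erase.1 ht').1, ht⟩
  · have ha1 : a ≠ 1 := fun h => h₁.notMem (h ▸ h1₁)
    rcases ha with rfl | ha
    · exact mem_insert_self _ _
    · exact mem_insert_of_mem (mem_erase.2 ⟨ha1, ha⟩)

theorem not_disjoint_erase_one (hn : 6 ≤ n) (hindep : Indep n F) (hls : LeftShiftedP n F)
    (h₁ : HasFlag n F a C₁) (h₂ : HasFlag n F b C₂) (h1₁ : 1 ∈ C₁) (h1₂ : 1 ∈ C₂) :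
    ¬ Disjoint (C₁.erase 1) (C₂.erase 1) := by
  intro hd
  by_cases ha : a ∈ C₂ <;> by_cases hb : b ∈ C₁
  · -- Each point lies in the other complement; for a point `x ∉ C₁ ∪ C₂`, lowering `a` to `x`
    -- or raising `a ∈ C₂` to `x` removes this obstruction.
    obtain ⟨x, hx, hxC⟩ : ∃ x ∈ Iv n, x ∉ C₁ ∪ C₂ := by
      refine exists_mem_notMem_of_card_lt_card ?_
      have hunion := card_union_add_card_inter C₁ C₂
      have hinter := card_pos.2 ⟨1, mem_inter.2 ⟨h1₁, h1₂⟩⟩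
      rw [h₁.card_eq, h₂.card_eq] at hunion
      rw [card_Iv]
      omega
    rw [mem_union, not_or] at hxC
    rcases le_or_gt x a with hxa | hax
    · exact not_opposite_swap_one hindep hls h₂ (h₁.lower hls hx hxa hxC.1) h1₂ h1₁ hd.symm
        hxC.2 (Or.inr hb)
    · have hxb : x ≠ b := fun h => hxC.1 (h ▸ hb)
      have ha1 : a ≠ 1 := fun h => h₁.notMem (h ▸ h1₁)
      refine not_opposite_swap_one hindep hls (h₂.raise hls ha hx hax.le hxC.2 hxb) h₁
        (mem_insert_of_mem (mem_erase.2 ⟨ha1.symm, h1₂⟩)) h1₁ ?_ ?_ (Or.inr hb)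
      · simp only [disjoint_left, mem_erase, mem_insert] at hd ⊢
        grind
      · simp [hax.ne]
  · exact not_opposite_swap_one hindep hls h₁ h₂ h1₁ h1₂ hd hb (Or.inr ha)
  · exact not_opposite_swap_one hindep hls h₂ h₁ h1₂ h1₁ hd.symm ha (Or.inr hb)
  · rcases le_total a b with hab | hba
    · exact not_opposite_swap_one hindep hls (h₂.lower hls h₁.point_mem hab ha) h₁ h1₂ h1₁
        hd.symm ha (Or.inl rfl)
    · exact not_opposite_swap_one hindep hls (h₁.lower hls h₂.point_mem hba hb) h₂ h1₁ h1₂ hd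
        hb (Or.inl rfl)

end HasFlag

section Counting

variable {n : ℕ} {F : Finset (Finset ℕ × Finset ℕ)}

lemma exists_hasFlag_of_mem (hn : 3 ≤ n) (hflags : ∀ f ∈ F, IsFlag n 1 (n - 3) f)
    {f : Finset ℕ × Finset ℕ} (hf : f ∈ F) : ∃ a, HasFlag n F a (Iv n \ f.2) := by
  obtain ⟨hAB, hB, hA1, hBcard⟩ := hflags f hf
  obtain ⟨a, ha⟩ := card_eq_one.1 hA1
  have haB : a ∈ f.2 := hAB (ha ▸ mem_singleton_self a)
  refine ⟨a, hB haB, fun h => (mem_sdiff.1 h).2 haB, sdiff_subset, ?_, ?_⟩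
  · rw [card_sdiff_of_subset hB, card_Iv, hBcard]
    omega
  · rwa [flagOf, Finset.sdiff_sdiff_eq_self hB, ← ha]

lemma isFlag_flagOf_one {S : Finset ℕ} (hn : 3 ≤ n)
    (hS : S ∈ powersetCard 3 ((Iv n).erase 1)) :
    IsFlag n 1 (n - 3) (flagOf n 1 S) := by
  obtain ⟨hSsub, hScard⟩ := mem_powersetCard.1 hS
  refine ⟨?_, sdiff_subset, card_singleton 1, ?_⟩
  · simpa [flagOf] using ⟨one_mem_Iv (by omega), fun h => (mem_erase.1 (hSsub h)).1 rfl⟩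
  · rw [flagOf, card_sdiff_of_subset (hSsub.trans (erase_subset _ _)), card_Iv, hScard]

lemma oppFlag_flagOf_one {f : Finset ℕ × Finset ℕ} {S : Finset ℕ} (hf : f.2 ⊆ Iv n)
    (h1 : 1 ∉ f.2) (hAS : f.1 ⊆ S) (hSB : S ⊆ f.2) : OppFlag n f (flagOf n 1 S) := by
  refine ⟨?_, ?_, singleton_inter_of_notMem h1⟩
  · ext x
    have := @hf x
    have := @hSB x
    simp only [flagOf, mem_union, mem_sdiff]
    tauto
  · exact disjoint_iff_inter_eq_empty.1 (disjoint_sdiff.mono_left hAS)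

lemma Indep.union_of_fst_eq_one {G H : Finset (Finset ℕ × Finset ℕ)} (hG : Indep n G)
    (h1 : ∀ f ∈ G ∪ H, 1 ∈ f.2) (hH : ∀ h ∈ H, h.1 = {1}) : Indep n (G ∪ H) := by
  intro f hf g hg ⟨_, hfg, hgf⟩
  rcases mem_union.1 hf with hfG | hfH
  · rcases mem_union.1 hg with hgG | hgH
    · exact hG f hfG g hgG ⟨‹_›, hfg, hgf⟩
    · rw [hH g hgH, singleton_inter_of_mem (h1 f hf)] at hgf
      exact singleton_ne_empty 1 hgf
  · rw [hH f hfH, singleton_inter_of_mem (h1 g hg)] at hfg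
    exact singleton_ne_empty 1 hfg

theorem card_filter_flagOf_one_notMem_le (hn : 3 ≤ n)
    (hflags : ∀ f ∈ F, IsFlag n 1 (n - 3) f) (hindep : Indep n F)
    (hmax : ∀ G : Finset (Finset ℕ × Finset ℕ),
      (∀ g ∈ G, IsFlag n 1 (n - 3) g) → Indep n G → G.card ≤ F.card) :
    #{S ∈ powersetCard 3 ((Iv n).erase 1) | flagOf n 1 S ∉ F} ≤ #{f ∈ F | 1 ∉ f.2} := by
  set M := {S ∈ powersetCard 3 ((Iv n).erase 1) | flagOf n 1 S ∉ F}
  have hM : ∀ S ∈ M, S ∈ powersetCard 3 ((Iv n).erase 1) ∧ flagOf n 1 S ∉ F :=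
    fun S hS => mem_filter.1 hS
  have hinj : Set.InjOn (flagOf n 1) M := (flagOf_injOn n 1).mono fun S hS =>
    (mem_powersetCard.1 (hM S hS).1).1.trans (erase_subset 1 (Iv n))
  have hdisj : Disjoint {f ∈ F | 1 ∈ f.2} (M.image (flagOf n 1)) := by
    refine disjoint_left.2 fun f hf hf' => ?_
    obtain ⟨S, hS, rfl⟩ := mem_image.1 hf'
    exact (hM S hS).2 (mem_filter.1 hf).1
  have hle := hmax ({f ∈ F | 1 ∈ f.2} ∪ M.image (flagOf n 1)) ?_ ?_
  · rw [card_union_of_disjoint hdisj, card_image_of_injOn hinj] at hle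
    have := card_filter_add_card_filter_not (s := F) (fun f => 1 ∈ f.2)
    omega
  · intro g hg
    rcases mem_union.1 hg with hg | hg
    · exact hflags g (mem_filter.1 hg).1
    · obtain ⟨S, hS, rfl⟩ := mem_image.1 hg
      exact isFlag_flagOf_one hn (hM S hS).1
  · refine Indep.union_of_fst_eq_one (fun f hf g hg => hindep f (mem_filter.1 hf).1 g
      (mem_filter.1 hg).1) ?_ ?_
    · intro g hg
      rcases mem_union.1 hg with hg | hg
      · exact (mem_filter.1 hg).2
      · obtain ⟨S, hS, rfl⟩ := mem_image.1 hg
        exact (isFlag_flagOf_one hn (hM S hS).1).1 (mem_singleton_self 1)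
    · intro g hg
      obtain ⟨S, -, rfl⟩ := mem_image.1 hg
      rfl

theorem intersecting_erase_one_sdiff_snd (hn : 6 ≤ n) (hflags : ∀ f ∈ F, IsFlag n 1 (n - 3) f)
    (hindep : Indep n F) (hls : LeftShiftedP n F) :
    (({f ∈ F | 1 ∉ f.2}.image fun f => (Iv n \ f.2).erase 1 : Finset (Finset ℕ)) :
      Set (Finset ℕ)).Intersecting := by
  intro P hP Q hQ
  obtain ⟨f, hf, rfl⟩ := mem_image.1 (mem_coe.1 hP)
  obtain ⟨g, hg, rfl⟩ := mem_image.1 (mem_coe.1 hQ)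
  obtain ⟨hfF, hf1⟩ := mem_filter.1 hf
  obtain ⟨hgF, hg1⟩ := mem_filter.1 hg
  obtain ⟨a, ha⟩ := exists_hasFlag_of_mem (by omega) hflags hfF
  obtain ⟨b, hb⟩ := exists_hasFlag_of_mem (by omega) hflags hgF
  have h1 : (1 : ℕ) ∈ Iv n := one_mem_Iv (by omega)
  exact ha.not_disjoint_erase_one hn hindep hls hb (mem_sdiff.2 ⟨h1, hf1⟩)
    (mem_sdiff.2 ⟨h1, hg1⟩)

lemma sdiff_insert_one_erase_one {B : Finset ℕ} (hB : B ⊆ Iv n) (h1n : 1 ∈ Iv n)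
    (h1B : 1 ∉ B) :
    Iv n \ insert 1 ((Iv n \ B).erase 1) = B := by
  rw [insert_erase (mem_sdiff.2 ⟨h1n, h1B⟩), Finset.sdiff_sdiff_eq_self hB]

theorem card_filter_fst_subset_subset_snd_le (hn : 11 ≤ n) (hflags : ∀ f ∈ F, IsFlag n 1 (n - 3) f)
    (hindep : Indep n F) (hls : LeftShiftedP n F) {S : Finset ℕ}
    (hS : S ∈ powersetCard 3 ((Iv n).erase 1)) :
    #{f ∈ {f ∈ F | 1 ∉ f.2} | f.1 ⊆ S ∧ S ⊆ f.2} ≤ 3 * (n - 5) := by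
  obtain ⟨hSsub, hScard⟩ := mem_powersetCard.1 hS
  set below := {f ∈ {f ∈ F | 1 ∉ f.2} | f.1 ⊆ S ∧ S ⊆ f.2}
  have hbelow : ∀ f ∈ below, (f ∈ F ∧ 1 ∉ f.2) ∧ f.1 ⊆ S ∧ S ⊆ f.2 := by
    intro f hf
    simpa only [below, mem_filter] using hf
  set pairs := below.image fun f => (Iv n \ f.2).erase 1
  have h1n : (1 : ℕ) ∈ Iv n := one_mem_Iv (by omega)
  have hpairs : #pairs ≤ n - 5 := by
    have hV : #(((Iv n).erase 1) \ S) = n - 4 := by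
      rw [card_sdiff_of_subset hSsub, card_erase_of_mem h1n, card_Iv, hScard]
      omega
    have := card_le_choose_of_intersecting (V := ((Iv n).erase 1) \ S) (𝒜 := pairs) (r := 2)
      ((intersecting_erase_one_sdiff_snd (by omega) hflags hindep hls).mono ?_) ?_ ?_ (by omega)
    · simpa [hV, Nat.sub_sub] using this
    · exact coe_subset.2 (image_subset_image (filter_subset _ _))
    · intro P hP
      obtain ⟨f, hf, rfl⟩ := mem_image.1 (mem_coe.1 hP)
      obtain ⟨a, ha⟩ := exists_hasFlag_of_mem (by omega) hflags (hbelow f hf).1.1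
      rw [card_erase_of_mem (mem_sdiff.2 ⟨h1n, (hbelow f hf).1.2⟩), ha.card_eq]
    · intro P hP x hx
      obtain ⟨f, hf, rfl⟩ := mem_image.1 hP
      obtain ⟨hx1, hx⟩ := mem_erase.1 hx
      obtain ⟨hxn, hxf⟩ := mem_sdiff.1 hx
      exact mem_sdiff.2 ⟨mem_erase.2 ⟨hx1, hxn⟩, fun hxS => hxf ((hbelow f hf).2.2 hxS)⟩
  calc #below ≤ #(S.powersetCard 1 ×ˢ pairs) := by
        refine card_le_card_of_injOn (fun f => (f.1, (Iv n \ f.2).erase 1))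
          (fun f hf => ?_) (fun f hf g hg h => ?_)
        · exact mem_product.2 ⟨mem_powersetCard.2 ⟨(hbelow f hf).2.1,
            (hflags f (hbelow f hf).1.1).2.2.1⟩, mem_image_of_mem _ hf⟩
        · obtain ⟨h₁, h₂⟩ := Prod.mk.inj h
          refine Prod.ext h₁ ?_
          rw [← sdiff_insert_one_erase_one (hflags f (hbelow f hf).1.1).2.1 h1n
            (hbelow f hf).1.2, h₂, sdiff_insert_one_erase_one (hflags g (hbelow g hg).1.1).2.1
            h1n (hbelow g hg).1.2]
    _ ≤ 3 * (n - 5) := by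
        rw [card_product, card_powersetCard, hScard]
        simpa using hpairs

lemma choose_le_card_filter_fst_subset_subset_snd (hflags : ∀ f ∈ F, IsFlag n 1 (n - 3) f)
    (hindep : Indep n F) {f : Finset ℕ × Finset ℕ} (hf : f ∈ {f ∈ F | 1 ∉ f.2}) :
    (n - 4).choose 2 ≤
      #{S ∈ {S ∈ powersetCard 3 ((Iv n).erase 1) | flagOf n 1 S ∉ F} | f.1 ⊆ S ∧ S ⊆ f.2} := by
  obtain ⟨hfF, hf1⟩ := mem_filter.1 hf
  obtain ⟨hAB, hB, hA, hBcard⟩ := hflags f hfF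
  obtain ⟨a, ha⟩ := card_eq_one.1 hA
  have haB : a ∈ f.2 := hAB (ha ▸ mem_singleton_self a)
  have hBU : f.2 ⊆ (Iv n).erase 1 := fun x hx => mem_erase.2 ⟨fun h => hf1 (h ▸ hx), hB hx⟩
  calc (n - 4).choose 2 = (#f.2 - 1).choose 2 := by
        rw [hBcard, show n - 3 - 1 = n - 4 by omega]
    _ ≤ #{S ∈ powersetCard 3 ((Iv n).erase 1) | a ∈ S ∧ S ⊆ f.2} :=
      choose_le_card_filter_mem_subset haB hBU 2
    _ ≤ _ := by
      refine card_le_card fun S hS => ?_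
      obtain ⟨hSU, haS, hSB⟩ := mem_filter.1 hS
      have hAS : f.1 ⊆ S := ha ▸ singleton_subset_iff.2 haS
      exact mem_filter.2 ⟨mem_filter.2 ⟨hSU, fun hS' =>
        hindep f hfF _ hS' (oppFlag_flagOf_one hB hf1 hAS hSB)⟩, hAS, hSB⟩

theorem one_mem_snd_of_maximum (hn : 11 ≤ n) (hflags : ∀ f ∈ F, IsFlag n 1 (n - 3) f)
    (hindep : Indep n F) (hls : LeftShiftedP n F)
    (hmax : ∀ G : Finset (Finset ℕ × Finset ℕ),
      (∀ g ∈ G, IsFlag n 1 (n - 3) g) → Indep n G → G.card ≤ F.card) :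
    ∀ f ∈ F, 1 ∈ f.2 := by
  set bad := {f ∈ F | 1 ∉ f.2}
  set missing := {S ∈ powersetCard 3 ((Iv n).erase 1) | flagOf n 1 S ∉ F}
  have hcount : #bad * (n - 4).choose 2 ≤ #missing * (3 * (n - 5)) :=
    card_mul_le_card_mul (fun (f : Finset ℕ × Finset ℕ) (S : Finset ℕ) => f.1 ⊆ S ∧ S ⊆ f.2)
      (fun f hf => choose_le_card_filter_fst_subset_subset_snd hflags hindep hf) fun S hS =>
        card_filter_fst_subset_subset_snd_le hn hflags hindep hls (mem_filter.1 hS).1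
  have hmissing : #missing ≤ #bad :=
    card_filter_flagOf_one_notMem_le (by omega) hflags hindep hmax
  have hbad : #bad = 0 := by
    have := three_mul_lt_choose_two hn
    nlinarith
  intro f hf
  by_contra h1
  exact notMem_empty f (card_eq_zero.1 hbad ▸ mem_filter.2 ⟨hf, h1⟩)

theorem flagOf_one_mem_of_maximum (hn : 3 ≤ n) (hflags : ∀ f ∈ F, IsFlag n 1 (n - 3) f)
    (hindep : Indep n F)
    (hmax : ∀ G : Finset (Finset ℕ × Finset ℕ),
      (∀ g ∈ G, IsFlag n 1 (n - 3) g) → Indep n G → G.card ≤ F.card)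
    (hone : ∀ f ∈ F, 1 ∈ f.2) {S : Finset ℕ} (hS : S ∈ powersetCard 3 ((Iv n).erase 1)) :
    flagOf n 1 S ∈ F := by
  have := card_filter_flagOf_one_notMem_le hn hflags hindep hmax
  rw [filter_false_of_mem (s := F) fun f hf h => h (hone f hf), card_empty, Nat.le_zero,
    card_eq_zero, filter_eq_empty_iff] at this
  exact not_not.1 (this hS)

theorem weightA_singleton_one (hn : 3 ≤ n) (hflags : ∀ f ∈ F, IsFlag n 1 (n - 3) f)
    (hstars : ∀ S ∈ powersetCard 3 ((Iv n).erase 1), flagOf n 1 S ∈ F) :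
    weightA F {1} = (n - 1).choose 3 := by
  have h1n : (1 : ℕ) ∈ Iv n := one_mem_Iv (by omega)
  have hweight :
      {f ∈ F | f.1 = {1}} = (powersetCard 3 ((Iv n).erase 1)).image (flagOf n 1) := by
    ext f
    simp only [mem_filter, mem_image]
    constructor
    · rintro ⟨hf, hf1⟩
      obtain ⟨hAB, hB, -, -⟩ := hflags f hf
      obtain ⟨a, haf⟩ := exists_hasFlag_of_mem hn hflags hf
      have h1B : 1 ∈ f.2 := hAB (hf1 ▸ mem_singleton_self 1)
      refine ⟨Iv n \ f.2, mem_powersetCard.2 ⟨fun x hx => ?_, haf.card_eq⟩, ?_⟩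
      · exact mem_erase.2 ⟨by rintro rfl; exact (mem_sdiff.1 hx).2 h1B, (mem_sdiff.1 hx).1⟩
      · rw [flagOf, Finset.sdiff_sdiff_eq_self hB, ← hf1]
    · rintro ⟨S, hS, rfl⟩
      exact ⟨hstars S hS, rfl⟩
  rw [weightA, hweight, card_image_of_injOn ((flagOf_injOn n 1).mono fun S hS =>
    (mem_powersetCard.1 hS).1.trans (erase_subset 1 (Iv n))), card_powersetCard,
    card_erase_of_mem h1n, card_Iv]

end Counting

/-- for `n ≥ 11`, in a maximum left-shifted independent set `ℱ` of
flags of type `{1,n−3}`, the singleton `{1}` has weight `C(n−1,3)`; equivalently,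
every flag `(A,B) ∈ ℱ` satisfies `1 ∈ B`. -/
theorem stmt_15 (n : ℕ) (hn : 11 ≤ n)
    (F : Finset (Finset ℕ × Finset ℕ)) (hflags : ∀ f ∈ F, IsFlag n 1 (n - 3) f)
    (hindep : Indep n F) (hls : LeftShiftedP n F)
    (hmax : ∀ G : Finset (Finset ℕ × Finset ℕ),
      (∀ g ∈ G, IsFlag n 1 (n - 3) g) → Indep n G → G.card ≤ F.card) :
    weightA F {1} = Nat.choose (n - 1) 3 ∧ ∀ f ∈ F, 1 ∈ f.2 := by
  have hone := one_mem_snd_of_maximum hn hflags hindep hls hmax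
  exact ⟨weightA_singleton_one (by omega) hflags fun S hS =>
    flagOf_one_mem_of_maximum (by omega) hflags hindep hmax hone hS, hone⟩
end

section
/- For n ≥ 11, if ℱ is a maximum independent set of flags of type {1,n−3} of [n] such that every flag (A,B) ∈ ℱ satisfies 1 ∈ B, then |ℱ| ≤ C(n−1,3) + α(n−1), where α(n−1) denotes the maximum size of an independent set of flags of type {1,n−4} of [n−1]. -/
open Finset

/-! Split `ℱ` according to whether `A = {1}`. A flag `({1}, B)` is determined by `B \ {1}`, an
`(n-4)`-subset of `[n] \ {1}`, so there are at most `C(n-1, n-4) = C(n-1, 3)` of them. For every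
other flag `1 ∈ B \ A`, and deleting `1` from `B` and relabelling `k + 1 ↦ k` gives an injective map
to flags of type `{1, n-4}` of `[n-1]`. It reflects opposition, because the deleted point `1` lies
in every `B` and in no `A`; so the image of the rest of `ℱ` is independent and has at most
`α(n-1)` elements. -/

lemma Indep.mono {n : ℕ} {F G : Finset (Finset ℕ × Finset ℕ)} (hF : Indep n F) (hGF : G ⊆ F) :
    Indep n G :=
  fun f hf g hg => hF f (hGF hf) g (hGF hg)

lemma IsFlag.zero_notMem {n a b : ℕ} {f : Finset ℕ × Finset ℕ} (hf : IsFlag n a b f) :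
    0 ∉ f.2 := fun h => by simpa [Iv] using hf.2.1 h

lemma IsFlag.one_notMem_fst {n b : ℕ} {f : Finset ℕ × Finset ℕ} (hf : IsFlag n 1 b f)
    (hA : f.1 ≠ {1}) : 1 ∉ f.1 := by
  obtain ⟨a, ha⟩ := card_eq_one.mp hf.2.2.1
  rw [ha, mem_singleton]
  rintro rfl
  exact hA ha

lemma card_le_choose_of_fst_eq_singleton_one {n b : ℕ} {S : Finset (Finset ℕ × Finset ℕ)}
    (hS : ∀ f ∈ S, IsFlag n 1 b f ∧ f.1 = {1}) : S.card ≤ (n - 1).choose (b - 1) := by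
  have hB : ∀ f ∈ S, 1 ∈ f.2 := fun f hf => (hS f hf).1.1 (by simp [(hS f hf).2])
  calc S.card ≤ (((Iv n).erase 1).powersetCard (b - 1)).card := by
        refine card_le_card_of_injOn (fun f => f.2.erase 1) (fun f hf => ?_)
          (fun f hf g hg hfg => ?_)
        · obtain ⟨⟨-, hBn, -, hb⟩, -⟩ := hS f hf
          simpa [mem_powersetCard, card_erase_of_mem (hB f hf), hb] using erase_subset_erase 1 hBn
        · refine Prod.ext ((hS f hf).2.trans (hS g hg).2.symm) ?_
          rw [← insert_erase (hB f hf), ← insert_erase (hB g hg)]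
          exact congrArg (insert 1) hfg
    _ = (n - 1).choose (b - 1) := by simp [Iv]

/-- Deletes `1` and relabels `k + 1 ↦ k`: on subsets of `[n]` this identifies `[n] \ {1}` with
`[n - 1]`. -/
noncomputable def lowerSet (s : Finset ℕ) : Finset ℕ :=
  (s.erase 1).preimage Nat.succ Nat.succ_injective.injOn

noncomputable def lowerFlag (f : Finset ℕ × Finset ℕ) : Finset ℕ × Finset ℕ :=
  (lowerSet f.1, lowerSet f.2)

lemma mem_lowerSet {s : Finset ℕ} {x : ℕ} : x ∈ lowerSet s ↔ x ≠ 0 ∧ x + 1 ∈ s := by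
  simp [lowerSet]

lemma image_succ_lowerSet {s : Finset ℕ} (hs : 0 ∉ s) :
    (lowerSet s).image Nat.succ = s.erase 1 := by
  ext x
  cases x with
  | zero => simp [hs]
  | succ y => simp [mem_lowerSet]

lemma card_lowerSet {s : Finset ℕ} (hs : 0 ∉ s) : (lowerSet s).card = (s.erase 1).card := by
  rw [← image_succ_lowerSet hs, card_image_of_injective _ Nat.succ_injective]

lemma erase_one_eq_of_lowerSet_eq {s t : Finset ℕ} (hs : 0 ∉ s) (ht : 0 ∉ t)
    (h : lowerSet s = lowerSet t) : s.erase 1 = t.erase 1 := by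
  rw [← image_succ_lowerSet hs, ← image_succ_lowerSet ht, h]

lemma exists_eq_succ_of_mem_Iv {n x : ℕ} (hx : x ∈ Iv n) (hx1 : x ≠ 1) :
    ∃ y ∈ Iv (n - 1), x = y + 1 := by
  simp only [Iv, mem_Icc] at hx ⊢
  exact ⟨x - 1, by omega, by omega⟩

lemma inter_eq_empty_of_lowerSet {n : ℕ} {s t : Finset ℕ} (hs : s ⊆ Iv n) (hs1 : 1 ∉ s)
    (h : lowerSet s ∩ lowerSet t = ∅) : s ∩ t = ∅ := by
  refine eq_empty_of_forall_notMem fun x hx => ?_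
  obtain ⟨hxs, hxt⟩ := mem_inter.mp hx
  obtain ⟨y, hy, rfl⟩ := exists_eq_succ_of_mem_Iv (hs hxs) (ne_of_mem_of_not_mem hxs hs1)
  have hy0 : y ≠ 0 := by simp only [Iv, mem_Icc] at hy; omega
  exact notMem_empty y <|
    h ▸ mem_inter.mpr ⟨mem_lowerSet.mpr ⟨hy0, hxs⟩, mem_lowerSet.mpr ⟨hy0, hxt⟩⟩

lemma union_eq_Iv_of_lowerSet {n : ℕ} {s t : Finset ℕ} (hs : s ⊆ Iv n) (ht : t ⊆ Iv n)
    (hs1 : 1 ∈ s) (h : lowerSet s ∪ lowerSet t = Iv (n - 1)) : s ∪ t = Iv n := by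
  refine (union_subset hs ht).antisymm fun x hx => ?_
  rcases eq_or_ne x 1 with rfl | hx1
  · exact mem_union_left t hs1
  obtain ⟨y, hy, rfl⟩ := exists_eq_succ_of_mem_Iv hx hx1
  rcases mem_union.mp (h ▸ hy) with hy | hy
  · exact mem_union_left t (mem_lowerSet.mp hy).2
  · exact mem_union_right s (mem_lowerSet.mp hy).2

lemma IsFlag.lowerFlag {n a b : ℕ} {f : Finset ℕ × Finset ℕ} (hf : IsFlag n a b f)
    (hA : 1 ∉ f.1) (hB : 1 ∈ f.2) : IsFlag (n - 1) a (b - 1) (lowerFlag f) := by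
  have h0 := hf.zero_notMem
  obtain ⟨hAB, hBn, ha, hb⟩ := hf
  refine ⟨fun x hx => ?_, fun x hx => ?_, ?_, ?_⟩
  · exact mem_lowerSet.mpr ⟨(mem_lowerSet.mp hx).1, hAB (mem_lowerSet.mp hx).2⟩
  · obtain ⟨hx0, hxB⟩ := mem_lowerSet.mp hx
    have := hBn hxB
    simp only [Iv, mem_Icc] at this ⊢
    omega
  · show (lowerSet f.1).card = a
    rw [card_lowerSet fun h => h0 (hAB h), erase_eq_of_notMem hA, ha]
  · show (lowerSet f.2).card = b - 1
    rw [card_lowerSet h0, card_erase_of_mem hB, hb]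

lemma OppFlag.of_lowerFlag {n a b a' b' : ℕ} {f g : Finset ℕ × Finset ℕ}
    (hf : IsFlag n a b f) (hg : IsFlag n a' b' g) (hf1 : 1 ∉ f.1) (hg1 : 1 ∉ g.1) (hB : 1 ∈ f.2)
    (h : OppFlag (n - 1) (lowerFlag f) (lowerFlag g)) : OppFlag n f g :=
  ⟨union_eq_Iv_of_lowerSet hf.2.1 hg.2.1 hB h.1,
    inter_eq_empty_of_lowerSet (hf.1.trans hf.2.1) hf1 h.2.1,
    inter_eq_empty_of_lowerSet (hg.1.trans hg.2.1) hg1 h.2.2⟩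

section Lowering

variable {n a b : ℕ} {S : Finset (Finset ℕ × Finset ℕ)}

lemma card_image_lowerFlag (hS : ∀ f ∈ S, IsFlag n a b f ∧ 1 ∉ f.1 ∧ 1 ∈ f.2) :
    (S.image lowerFlag).card = S.card := by
  refine card_image_of_injOn fun f hf g hg hfg => ?_
  obtain ⟨hf, hf1, hf1'⟩ := hS f hf
  obtain ⟨hg, hg1, hg1'⟩ := hS g hg
  have hA := erase_one_eq_of_lowerSet_eq (fun h => hf.zero_notMem (hf.1 h))
    (fun h => hg.zero_notMem (hg.1 h)) (congrArg Prod.fst hfg)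
  have hB := erase_one_eq_of_lowerSet_eq hf.zero_notMem hg.zero_notMem (congrArg Prod.snd hfg)
  rw [erase_eq_of_notMem hf1, erase_eq_of_notMem hg1] at hA
  exact Prod.ext hA (by rw [← insert_erase hf1', ← insert_erase hg1', hB])

lemma isFlag_of_mem_image_lowerFlag (hS : ∀ f ∈ S, IsFlag n a b f ∧ 1 ∉ f.1 ∧ 1 ∈ f.2) :
    ∀ g ∈ S.image lowerFlag, IsFlag (n - 1) a (b - 1) g := by
  simp only [mem_image, forall_exists_index, and_imp]
  rintro _ f hf rfl
  exact (hS f hf).1.lowerFlag (hS f hf).2.1 (hS f hf).2.2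

lemma Indep.image_lowerFlag (hS : ∀ f ∈ S, IsFlag n a b f ∧ 1 ∉ f.1 ∧ 1 ∈ f.2)
    (hind : Indep n S) : Indep (n - 1) (S.image lowerFlag) := by
  simp only [Indep, mem_image, forall_exists_index, and_imp]
  rintro _ f hf rfl _ g hg rfl
  exact fun h => hind f hf g hg <|
    h.of_lowerFlag (hS f hf).1 (hS g hg).1 (hS f hf).2.1 (hS g hg).2.1 (hS f hf).2.2

end Lowering

theorem stmt_16_general (n : ℕ) (hn : 11 ≤ n)
    (F : Finset (Finset ℕ × Finset ℕ)) (hflags : ∀ f ∈ F, IsFlag n 1 (n - 3) f)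
    (hindep : Indep n F)
    (h1 : ∀ f ∈ F, 1 ∈ f.2)
    (α : ℕ)
    (hα : IsGreatest {k : ℕ | ∃ G : Finset (Finset ℕ × Finset ℕ),
      (∀ g ∈ G, IsFlag (n - 1) 1 (n - 4) g) ∧ Indep (n - 1) G ∧ G.card = k} α) :
    F.card ≤ Nat.choose (n - 1) 3 + α := by
  rw [← card_filter_add_card_filter_not (s := F) (p := fun f => f.1 = {1})]
  apply add_le_add
  · calc _ ≤ (n - 1).choose (n - 3 - 1) := card_le_choose_of_fst_eq_singleton_one fun f hf =>
          ⟨hflags f (mem_filter.mp hf).1, (mem_filter.mp hf).2⟩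
      _ = (n - 1).choose 3 := Nat.choose_symm_of_eq_add (by omega)
  · have hS : ∀ f ∈ F.filter (fun f => ¬f.1 = {1}),
        IsFlag n 1 (n - 3) f ∧ 1 ∉ f.1 ∧ 1 ∈ f.2 := fun f hf =>
      have hfF := (mem_filter.mp hf).1
      ⟨hflags f hfF, (hflags f hfF).one_notMem_fst (mem_filter.mp hf).2, h1 f hfF⟩
    exact hα.2 ⟨_, isFlag_of_mem_image_lowerFlag hS,
      (hindep.mono (filter_subset _ F)).image_lowerFlag hS, card_image_lowerFlag hS⟩

/-- for `n ≥ 11`, if `ℱ` is a maximum independent set of flags of type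
`{1,n−3}` of `[n]` in which every flag `(A,B)` satisfies `1 ∈ B`, then
`|ℱ| ≤ C(n−1,3) + α(n−1)`, where `α(n−1)` is the independence number for flags of
type `{1,n−4}` of `[n−1]`. -/
theorem stmt_16 (n : ℕ) (hn : 11 ≤ n)
    (F : Finset (Finset ℕ × Finset ℕ)) (hflags : ∀ f ∈ F, IsFlag n 1 (n - 3) f)
    (hindep : Indep n F)
    (hmax : ∀ G : Finset (Finset ℕ × Finset ℕ),
      (∀ g ∈ G, IsFlag n 1 (n - 3) g) → Indep n G → G.card ≤ F.card)
    (h1 : ∀ f ∈ F, 1 ∈ f.2)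
    (α : ℕ)
    (hα : IsGreatest {k : ℕ | ∃ G : Finset (Finset ℕ × Finset ℕ),
      (∀ g ∈ G, IsFlag (n - 1) 1 (n - 4) g) ∧ Indep (n - 1) G ∧ G.card = k} α) :
    F.card ≤ Nat.choose (n - 1) 3 + α :=
  stmt_16_general n hn F hflags hindep h1 α hα
end

section
/- Let n ≥ 9 and let ℱ be an independent set of flags of type {1,n−3} of [n] in which every (n−3)-set occurring as second component has ℱ-weight at most some w with (n−5)/2 ≤ w ≤ n−3. If (A',B') ∈ ℱ and B' has weight exactly w, then the number of flags (A,B) with A = {1}, 1 ∉ A' ∪ B', that are opposite to some flag of ℱ containing B' is at least C(n−3,3) − C(n−w−3,3). -/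
open Finset

instance (n a b : ℕ) : DecidablePred (IsFlag n a b) := fun f => by
  unfold IsFlag; infer_instance

instance (n : ℕ) (f g : Finset ℕ × Finset ℕ) : Decidable (OppFlag n f g) := by
  unfold OppFlag; infer_instance

/-- The finset of all flags of type `{a,b}` of `[n]`. -/
def allFlags (n a b : ℕ) : Finset (Finset ℕ × Finset ℕ) :=
  ((Iv n).powerset ×ˢ (Iv n).powerset).filter (IsFlag n a b)

/-!
Every flag `({x}, B')` of `F` is opposite to `({1}, [n] \ C)` as soon as `x ∈ C ⊆ B'` and `1 ∉ B'`.
So `C ↦ ({1}, [n] \ C)` injects the `3`-subsets of `B'` meeting the witness set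
`W = {x | ({x}, B') ∈ F}` into the flags to be counted. Since `|W|` is the weight `w` of `B'`,
there are `C(n-3,3) - C(n-3-w,3)` such subsets: all `3`-subsets of `B'` minus those inside
`B' \ W`.
-/

theorem card_powersetCard_filter_not_disjoint {α : Type*} [DecidableEq α] {W B : Finset α}
    (hWB : W ⊆ B) (k : ℕ) :
    ((B.powersetCard k).filter (fun C => ¬ Disjoint C W)).card =
      B.card.choose k - (B.card - W.card).choose k := by
  have hdisj : (B.powersetCard k).filter (fun C => Disjoint C W) = (B \ W).powersetCard k := by
    ext C
    simp only [mem_filter, mem_powersetCard, subset_sdiff]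
    tauto
  have hsplit := card_filter_add_card_filter_not (s := B.powersetCard k) (fun C => Disjoint C W)
  rw [hdisj, card_powersetCard, card_powersetCard, card_sdiff_of_subset hWB] at hsplit
  omega

def witnessSet (F : Finset (Finset ℕ × Finset ℕ)) (B : Finset ℕ) : Finset ℕ :=
  B.filter (fun x => ({x}, B) ∈ F)

lemma witnessSet_subset (F : Finset (Finset ℕ × Finset ℕ)) (B : Finset ℕ) :
    witnessSet F B ⊆ B :=
  filter_subset _ _

lemma weightB_eq_card_witnessSet {n b : ℕ} {F : Finset (Finset ℕ × Finset ℕ)}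
    (hF : ∀ f ∈ F, IsFlag n 1 b f) (B : Finset ℕ) :
    weightB F B = (witnessSet F B).card := by
  have hfiber : F.filter (fun f => f.2 = B) = (witnessSet F B).image (fun x => ({x}, B)) := by
    ext ⟨A, B₀⟩
    simp only [mem_filter, mem_image, witnessSet, Prod.mk.injEq]
    constructor
    · rintro ⟨hf, rfl⟩
      obtain ⟨hAB, -, hA, -⟩ := hF _ hf
      obtain ⟨x, rfl⟩ := card_eq_one.1 hA
      exact ⟨x, ⟨hAB (mem_singleton_self x), hf⟩, rfl, rfl⟩
    · rintro ⟨x, ⟨-, hx⟩, rfl, rfl⟩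
      exact ⟨hx, rfl⟩
  rw [weightB, hfiber, card_image_of_injective]
  intro x y h
  simpa using congrArg Prod.fst h

lemma mem_allFlags {n a b : ℕ} {f : Finset ℕ × Finset ℕ} :
    f ∈ allFlags n a b ↔ IsFlag n a b f := by
  rw [allFlags, mem_filter, mem_product, mem_powerset, mem_powerset, and_iff_right_iff_imp]
  exact fun hf => ⟨hf.1.trans hf.2.1, hf.2.1⟩

lemma isFlag_sdiff {n a c : ℕ} {A C : Finset ℕ} (hA : A ⊆ Iv n) (hC : C ⊆ Iv n)
    (hAC : Disjoint A C) (hAcard : A.card = a) (hCcard : C.card = c) :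
    IsFlag n a (n - c) (A, Iv n \ C) := by
  refine ⟨subset_sdiff.2 ⟨hA, hAC⟩, sdiff_subset, hAcard, ?_⟩
  rw [card_sdiff_of_subset hC, hCcard]
  simp [Iv]

lemma oppFlag_sdiff {n : ℕ} {A A' B C : Finset ℕ} (hCB : C ⊆ B) (hB : B ⊆ Iv n)
    (hAB : Disjoint A B) (hA'C : A' ⊆ C) :
    OppFlag n (A, Iv n \ C) (A', B) := by
  refine ⟨?_, disjoint_iff_inter_eq_empty.1 hAB, ?_⟩
  · ext x
    have := @hCB x
    have := @hB x
    simp only [mem_union, mem_sdiff]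
    tauto
  · rw [← disjoint_iff_inter_eq_empty]
    exact disjoint_of_subset_left hA'C disjoint_sdiff

lemma sdiff_mem_filter_oppFlag {n k x : ℕ} {F : Finset (Finset ℕ × Finset ℕ)} {B C : Finset ℕ}
    (hB : B ⊆ Iv n) (h1B : 1 ∉ B) (hCB : C ⊆ B) (hCcard : C.card = k) (hxC : x ∈ C)
    (hx : ({x}, B) ∈ F) :
    ({1}, Iv n \ C) ∈ (allFlags n 1 (n - k)).filter
      (fun f => f.1 = {1} ∧ ∃ g ∈ F, g.2 = B ∧ OppFlag n f g) := by
  have h1Iv : 1 ∈ Iv n := by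
    have hxIv := hB (hCB hxC)
    simp only [Iv, mem_Icc] at hxIv ⊢
    omega
  have h1C : Disjoint {1} C := disjoint_singleton_left.2 fun h => h1B (hCB h)
  rw [mem_filter, mem_allFlags]
  exact ⟨isFlag_sdiff (singleton_subset_iff.2 h1Iv) (hCB.trans hB) h1C rfl hCcard, rfl,
    ({x}, B), hx, rfl,
    oppFlag_sdiff hCB hB (disjoint_singleton_left.2 h1B) (singleton_subset_iff.2 hxC)⟩

lemma injOn_sdiff_of_subset {α : Type*} [DecidableEq α] (s : Finset α) : 
    {C | C ⊆ s}.InjOn (s \ ·) := fun C₁ hC₁ C₂ hC₂ h => by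
  rw [← Finset.sdiff_sdiff_eq_self hC₁, ← Finset.sdiff_sdiff_eq_self hC₂]
  exact congrArg (s \ ·) h

theorem stmt_19_general (n w : ℕ)
    (F : Finset (Finset ℕ × Finset ℕ)) (hflags : ∀ f ∈ F, IsFlag n 1 (n - 3) f)
    (A' B' : Finset ℕ) (hmem : (A', B') ∈ F) (hwB' : weightB F B' = w)
    (h1 : 1 ∉ A' ∪ B') :
    Nat.choose (n - 3) 3 - Nat.choose (n - w - 3) 3 ≤
      ((allFlags n 1 (n - 3)).filter
        (fun f => f.1 = {1} ∧ ∃ g ∈ F, g.2 = B' ∧ OppFlag n f g)).card := by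
  obtain ⟨-, hB', -, hB'card⟩ := hflags _ hmem
  have h1B' : 1 ∉ B' := fun h => h1 (mem_union_right _ h)
  have hcount := card_powersetCard_filter_not_disjoint (witnessSet_subset F B') 3
  rw [← weightB_eq_card_witnessSet hflags, hwB', hB'card, Nat.sub_right_comm] at hcount
  rw [← hcount]
  refine card_le_card_of_injOn (fun C => ({1}, Iv n \ C)) ?_ ?_
  · intro C hC
    rw [mem_coe, mem_filter, mem_powersetCard, not_disjoint_iff] at hC
    obtain ⟨⟨hCB', hC3⟩, x, hxC, hxW⟩ := hC
    exact sdiff_mem_filter_oppFlag hB' h1B' hCB' hC3 hxC (mem_filter.1 hxW).2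
  · intro C₁ hC₁ C₂ hC₂ h
    rw [mem_coe, mem_filter, mem_powersetCard] at hC₁ hC₂
    exact injOn_sdiff_of_subset (Iv n) (hC₁.1.1.trans hB') (hC₂.1.1.trans hB')
      (congrArg Prod.snd h)

/-- let `ℱ` be an independent set of flags of type `{1,n−3}` (`n ≥ 9`)
in which every `(n−3)`-set occurring as a second component has weight at most `w`,
where `(n−5)/2 ≤ w ≤ n−3`. If `(A',B') ∈ ℱ`, `B'` has weight exactly `w`, and
`1 ∉ A' ∪ B'`, then the number of flags `(A,B)` with `A = {1}` opposite to some
flag of `ℱ` containing `B'` is at least `C(n−3,3) − C(n−w−3,3)`. -/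
theorem stmt_19 (n w : ℕ) (hn : 9 ≤ n)
    (hwlo : n - 5 ≤ 2 * w) (hwhi : w ≤ n - 3)
    (F : Finset (Finset ℕ × Finset ℕ)) (hflags : ∀ f ∈ F, IsFlag n 1 (n - 3) f)
    (hindep : Indep n F)
    (hwall : ∀ f ∈ F, weightB F f.2 ≤ w)
    (A' B' : Finset ℕ) (hmem : (A', B') ∈ F) (hwB' : weightB F B' = w)
    (h1 : 1 ∉ A' ∪ B') :
    Nat.choose (n - 3) 3 - Nat.choose (n - w - 3) 3 ≤
      ((allFlags n 1 (n - 3)).filter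
        (fun f => f.1 = {1} ∧ ∃ g ∈ F, g.2 = B' ∧ OppFlag n f g)).card :=
  stmt_19_general n w F hflags A' B' hmem hwB' h1
end
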